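/- arXiv:0803.1492 — 4 statements merged into one kernel-verified Lean document; each statement's English description precedes it below -/
import Mathlib

section
/- In the setting of the interacting Fleming–Viot cocycle Λ with ρ > 0: fix distinct ξ₁, ξ₂ ∈ I and f, g ∈ C(E); let 𝐟 ∈ C(E)^I₀ equal f at coordinate ξ₁ and 0 elsewhere, and 𝐠 ∈ C(E)^I₀ equal g at coordinate ξ₂ and 0 elsewhere. If X ∈ M₁(E)^I satisfies the cocycle identity in both orders, i.e. Λ(𝐟 + 𝐠, X) = Λ(𝐟, S_𝐠 X) + Λ(𝐠, X) and Λ(𝐟 + 𝐠, X) = Λ(𝐠, S_𝐟 X) + Λ(𝐟, X), then a(ξ₁, ξ₂) ⟨X_{ξ₂}^{g} − X_{ξ₂}, f⟩ = a(ξ₂, ξ₁) ⟨X_{ξ₁}^{f} − X_{ξ₁}, g⟩. -/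
open MeasureTheory Real ProbabilityTheory

noncomputable section

/-- The pairing `⟨μ, g⟩ = ∫ g dμ`. -/
def pairM {E : Type*} [MeasurableSpace E] (μ : Measure E) (g : E → ℝ) : ℝ := ∫ x, g x ∂μ

/-- `⟨S(μ), f⟩` for the selection operator with fitness function `V`. -/
def selPair {E : Type*} [MeasurableSpace E] (V : E → E → ℝ) (μ : Measure E) (f : E → ℝ) : ℝ :=
  (∫ u, (∫ v, V u v ∂μ) * f u ∂μ) - (∫ u, f u ∂μ) * (∫ u, ∫ v, V u v ∂μ ∂μ)

/-- `⟨R(μ), f⟩` for the recombination operator with recombination kernel `η`. -/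
def recPair {E : Type*} [MeasurableSpace E] (η : Kernel (E × E) E) (μ : Measure E)
    (f : E → ℝ) : ℝ :=
  (∫ v, ∫ w, ∫ z, f z ∂(η (v, w)) ∂μ ∂μ) - ∫ z, f z ∂μ

variable {E : Type*} [MetricSpace E] [CompactSpace E] [MeasurableSpace E] [BorelSpace E]
variable {I : Type*}

/-- The drift `⟨b_ξ(X), f⟩` of the interacting Fleming-Viot process with migration matrix `a`,
mutation operator `A`, selection `(s, V)` and recombination `(r, η)`. -/
def bPair (a : I → I → ℝ) (A : C(E, ℝ) →L[ℝ] C(E, ℝ)) (V : E → E → ℝ)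
    (η : Kernel (E × E) E) (s r ρ : ℝ) (X : I → Measure E) (ξ : I) (f : C(E, ℝ)) : ℝ :=
  pairM (X ξ) (A f) + ρ * (∑' ξ' : I, a ξ ξ' * (pairM (X ξ') f - pairM (X ξ) f))
    + s * selPair V (X ξ) f + r * recPair η (X ξ) f

/-- `⟨b(X), 𝐟⟩ = Σ_ξ ⟨b_ξ(X), f_ξ⟩`. -/
def bTotal (a : I → I → ℝ) (A : C(E, ℝ) →L[ℝ] C(E, ℝ)) (V : E → E → ℝ)
    (η : Kernel (E × E) E) (s r ρ : ℝ) (X : I → Measure E) (f : I → C(E, ℝ)) : ℝ :=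
  ∑' ξ : I, bPair a A V η s r ρ X ξ (f ξ)

/-- The cocycle `Λ(𝐟, X) = 2∫₀¹ ⟨b(S_{u𝐟}X), 𝐟⟩ du`. -/
def Lambda (a : I → I → ℝ) (A : C(E, ℝ) →L[ℝ] C(E, ℝ)) (V : E → E → ℝ)
    (η : Kernel (E × E) E) (s r ρ : ℝ) (f : I → C(E, ℝ)) (X : I → Measure E) : ℝ :=
  2 * ∫ u in (0:ℝ)..1, bTotal a A V η s r ρ (fun ξ => (X ξ).tilted (u • f ξ)) f

/-! If `𝐟` is supported at `ξ₁`, the integrand `⟨b(S_{u𝐟} Z), 𝐟⟩` of `Λ(𝐟, Z)` sees the sites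
`ξ ≠ ξ₁` only through the migration term `ρ Σ_ξ a(ξ₁, ξ) ⟨Z_ξ, f⟩`, which does not depend on `u`.
So if `Z` and `Z'` differ only at a site `ξ₂ ≠ ξ₁`, then
`Λ(𝐟, Z) - Λ(𝐟, Z') = 2ρ a(ξ₁, ξ₂) (⟨Z_ξ₂, f⟩ - ⟨Z'_ξ₂, f⟩)`; this needs the integrand to be integrable in `u`
(otherwise both interval integrals are `0`), which holds because it is bounded and measurable.
Subtracting the two cocycle identities gives `Λ(𝐟, S_𝐠 X) - Λ(𝐟, X) = Λ(𝐠, S_𝐟 X) - Λ(𝐠, X)`,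
and dividing by `2ρ` gives the claim. -/

open Filter Function

section Bounds

variable {Ω : Type*} [MeasurableSpace Ω]

lemma abs_integral_le_of_abs_le (ν : Measure Ω) [IsProbabilityMeasure ν] {h : Ω → ℝ} {C : ℝ}
    (hC : ∀ x, |h x| ≤ C) : |∫ x, h x ∂ν| ≤ C := by
  simpa using norm_integral_le_of_norm_le_const (μ := ν)
    (ae_of_all _ fun x => (Real.norm_eq_abs (h x)).trans_le (hC x))

lemma abs_selPair_le (ν : Measure Ω) [IsProbabilityMeasure ν] {V : Ω → Ω → ℝ} {CV : ℝ}
    (hV : ∀ u v, |V u v| ≤ CV) {f : Ω → ℝ} {C : ℝ} (hf : ∀ x, |f x| ≤ C) :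
    |selPair V ν f| ≤ CV * C + C * CV := by
  have hVν : ∀ u, |∫ v, V u v ∂ν| ≤ CV := fun u => abs_integral_le_of_abs_le ν (hV u)
  have hfirst : |∫ u, (∫ v, V u v ∂ν) * f u ∂ν| ≤ CV * C :=
    abs_integral_le_of_abs_le ν fun u => by
      rw [abs_mul]; exact mul_le_mul (hVν u) (hf u) (abs_nonneg _) ((abs_nonneg _).trans (hVν u))
  have hf' := abs_integral_le_of_abs_le ν hf
  have hsecond : |(∫ u, f u ∂ν) * ∫ u, ∫ v, V u v ∂ν ∂ν| ≤ C * CV := by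
    rw [abs_mul]
    exact mul_le_mul hf' (abs_integral_le_of_abs_le ν hVν) (abs_nonneg _)
      ((abs_nonneg _).trans hf')
  exact (abs_sub _ _).trans (add_le_add hfirst hsecond)

lemma abs_recPair_le (η : Kernel (Ω × Ω) Ω) [IsMarkovKernel η] (ν : Measure Ω)
    [IsProbabilityMeasure ν] {f : Ω → ℝ} {C : ℝ} (hf : ∀ x, |f x| ≤ C) :
    |recPair η ν f| ≤ C + C := by
  have hη : ∀ v w, |∫ z, f z ∂(η (v, w))| ≤ C := fun v w => abs_integral_le_of_abs_le _ hf
  exact (abs_sub _ _).trans <| add_le_add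
    (abs_integral_le_of_abs_le ν fun v => abs_integral_le_of_abs_le ν (hη v))
    (abs_integral_le_of_abs_le ν hf)

end Bounds

section Tilted

variable {Ω : Type*} [MeasurableSpace Ω]

lemma measurable_integral_tilted {P : Type*} [MeasurableSpace P] (μ : Measure Ω) [SFinite μ]
    {g F : P → Ω → ℝ} (hg : Measurable (uncurry g)) (hF : Measurable (uncurry F)) :
    Measurable fun p => ∫ x, F p x ∂(μ.tilted (g p)) := by
  simp_rw [integral_tilted, smul_eq_mul]
  have hnorm : Measurable fun p => ∫ x, exp (g p x) ∂μ :=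
    hg.exp.stronglyMeasurable.integral_prod_right'.measurable
  exact ((hg.exp.div (hnorm.comp measurable_fst)).mul hF).stronglyMeasurable
    |>.integral_prod_right' |>.measurable

variable (μ : Measure Ω) [SFinite μ] {φ : Ω → ℝ}

lemma measurable_integral_tilted_smul (hφ : Measurable φ) {F : ℝ → Ω → ℝ}
    (hF : Measurable (uncurry F)) : Measurable fun u : ℝ => ∫ x, F u x ∂(μ.tilted (u • φ)) :=
  measurable_integral_tilted μ (g := fun u => u • φ)
    (measurable_fst.smul (hφ.comp measurable_snd)) hF

lemma measurable_integral_integral_tilted_smul (hφ : Measurable φ) {W : Ω → Ω → ℝ}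
    (hW : Measurable (uncurry W)) {Φ : Ω → ℝ → ℝ} (hΦ : Measurable (uncurry Φ)) :
    Measurable fun u : ℝ =>
      ∫ x, Φ x (∫ y, W x y ∂(μ.tilted (u • φ))) ∂(μ.tilted (u • φ)) := by
  have hinner : Measurable fun p : ℝ × Ω => ∫ y, W p.2 y ∂(μ.tilted (p.1 • φ)) :=
    measurable_integral_tilted μ (g := fun p : ℝ × Ω => p.1 • φ) (F := fun p y => W p.2 y)
      (measurable_fst.fst.smul (hφ.comp measurable_snd))
      (hW.comp (measurable_fst.snd.prodMk measurable_snd))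
  exact measurable_integral_tilted_smul μ hφ
    (hΦ.comp (measurable_snd.prodMk hinner))

lemma measurable_selPair_tilted_smul (hφ : Measurable φ) {V : Ω → Ω → ℝ}
    (hV : Measurable fun p : Ω × Ω => V p.1 p.2) {f : Ω → ℝ} (hf : Measurable f) :
    Measurable fun u : ℝ => selPair V (μ.tilted (u • φ)) f :=
  (measurable_integral_integral_tilted_smul μ hφ hV (Φ := fun x t => t * f x) (by fun_prop)).sub
    ((measurable_integral_tilted_smul μ hφ (F := fun _ x => f x) (by fun_prop)).mul
      (measurable_integral_integral_tilted_smul μ hφ hV (Φ := fun _ t => t) (by fun_prop)))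

lemma measurable_recPair_tilted_smul (hφ : Measurable φ) (η : Kernel (Ω × Ω) Ω)
    [IsSFiniteKernel η] {f : Ω → ℝ} (hf : Measurable f) :
    Measurable fun u : ℝ => recPair η (μ.tilted (u • φ)) f := by
  have hη : Measurable fun p : Ω × Ω => ∫ z, f z ∂(η p) :=
    (hf.comp measurable_snd).stronglyMeasurable.integral_kernel_prod_right'.measurable
  exact (measurable_integral_integral_tilted_smul μ hφ (W := fun v w => ∫ z, f z ∂(η (v, w)))
    hη (Φ := fun _ t => t) (by fun_prop)).sub
    (measurable_integral_tilted_smul μ hφ (F := fun _ x => f x) (by fun_prop))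

end Tilted

lemma isProbabilityMeasure_tilted_continuousMap {Ω : Type*} [TopologicalSpace Ω]
    [CompactSpace Ω] [MeasurableSpace Ω] [OpensMeasurableSpace Ω] (μ : Measure Ω)
    [IsProbabilityMeasure μ] (g : C(Ω, ℝ)) : IsProbabilityMeasure (μ.tilted g) :=
  isProbabilityMeasure_tilted ((continuous_exp.comp g.continuous).integrable_of_hasCompactSupport
    (HasCompactSupport.of_compactSpace _))

lemma isProbabilityMeasure_tilted_smul {Ω : Type*} [TopologicalSpace Ω] [CompactSpace Ω]
    [MeasurableSpace Ω] [OpensMeasurableSpace Ω] (μ : Measure Ω) [IsProbabilityMeasure μ]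
    (u : ℝ) (g : C(Ω, ℝ)) : IsProbabilityMeasure (μ.tilted (u • ⇑g)) :=
  isProbabilityMeasure_tilted_continuousMap μ (u • g)

section Series

variable {ι : Type*}

lemma Measurable.tsum_of_summable {α : Type*} [MeasurableSpace α] [Countable ι]
    {f : ι → α → ℝ} (hf : ∀ i, Measurable (f i)) (hs : ∀ x, Summable (f · x)) :
    Measurable fun x => ∑' i, f i x :=
  measurable_of_tendsto_metrizable' atTop (fun s => Finset.measurable_sum s fun i _ => hf i)
    (tendsto_pi_nhds.2 fun x => (hs x).hasSum)

variable {w x : ι → ℝ} {C : ℝ}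

lemma summable_mul_of_abs_le (hw : Summable w) (hx : ∀ i, |x i| ≤ C) :
    Summable fun i => w i * x i :=
  (hw.abs.mul_right C).of_norm_bounded fun i => by
    rw [Real.norm_eq_abs, abs_mul]; exact mul_le_mul_of_nonneg_left (hx i) (abs_nonneg _)

lemma abs_tsum_mul_le (hw : Summable w) (hx : ∀ i, |x i| ≤ C) :
    |∑' i, w i * x i| ≤ (∑' i, |w i|) * C :=
  calc |∑' i, w i * x i| ≤ ∑' i, |w i * x i| :=
        norm_tsum_le_tsum_norm (summable_mul_of_abs_le hw hx).norm
    _ ≤ ∑' i, |w i| * C := (summable_mul_of_abs_le hw hx).abs.tsum_le_tsum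
        (fun i => by rw [abs_mul]; exact mul_le_mul_of_nonneg_left (hx i) (abs_nonneg _))
        (hw.abs.mul_right C)
    _ = (∑' i, |w i|) * C := tsum_mul_right

end Series

lemma ContinuousMap.abs_apply_le_norm {Ω : Type*} [TopologicalSpace Ω] [CompactSpace Ω]
    (f : C(Ω, ℝ)) (x : Ω) : |f x| ≤ ‖f‖ :=
  (Real.norm_eq_abs (f x)).symm.trans_le (f.norm_coe_le_norm x)

section ContinuousPairing

variable {Ω : Type*} [TopologicalSpace Ω] [CompactSpace Ω] [MeasurableSpace Ω]

lemma abs_pairM_le_norm (ν : Measure Ω) [IsProbabilityMeasure ν] (f : C(Ω, ℝ)) :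
    |pairM ν f| ≤ ‖f‖ :=
  abs_integral_le_of_abs_le ν f.abs_apply_le_norm

lemma abs_pairM_sub_pairM_le (ν ν' : Measure Ω) [IsProbabilityMeasure ν]
    [IsProbabilityMeasure ν'] (f : C(Ω, ℝ)) : |pairM ν f - pairM ν' f| ≤ ‖f‖ + ‖f‖ :=
  (abs_sub _ _).trans (add_le_add (abs_pairM_le_norm ν f) (abs_pairM_le_norm ν' f))

lemma summable_migration {a : I → I → ℝ} {ξ : I} (ha : Summable (a ξ)) {Y : I → Measure Ω}
    (hY : ∀ ξ, IsProbabilityMeasure (Y ξ)) (f : C(Ω, ℝ)) :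
    Summable fun ξ' => a ξ ξ' * (pairM (Y ξ') f - pairM (Y ξ) f) :=
  summable_mul_of_abs_le ha fun ξ' => abs_pairM_sub_pairM_le (Y ξ') (Y ξ) f

end ContinuousPairing

section Drift

variable {Ω : Type*} [MetricSpace Ω] [MeasurableSpace Ω]
  (a : I → I → ℝ) (A : C(Ω, ℝ) →L[ℝ] C(Ω, ℝ)) (V : Ω → Ω → ℝ) (η : Kernel (Ω × Ω) Ω) (s r ρ : ℝ)

lemma abs_bPair_le [CompactSpace Ω] {CV : ℝ} (hV : ∀ u v, |V u v| ≤ CV) [IsMarkovKernel η]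
    {ξ : I} (ha : Summable (a ξ)) {Y : I → Measure Ω} (hY : ∀ ξ, IsProbabilityMeasure (Y ξ))
    (f : C(Ω, ℝ)) :
    |bPair a A V η s r ρ Y ξ f| ≤ ‖A f‖ + |ρ| * ((∑' ξ', |a ξ ξ'|) * (‖f‖ + ‖f‖))
      + |s| * (CV * ‖f‖ + ‖f‖ * CV) + |r| * (‖f‖ + ‖f‖) := by
  have hAf := abs_pairM_le_norm (Y ξ) (A f)
  have hmig := abs_tsum_mul_le ha fun ξ' => abs_pairM_sub_pairM_le (Y ξ') (Y ξ) f
  have hsel := abs_selPair_le (Y ξ) hV f.abs_apply_le_norm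
  have hrec := abs_recPair_le η (Y ξ) f.abs_apply_le_norm
  have hmul : ∀ {c t B : ℝ}, |t| ≤ B → |c * t| ≤ |c| * B := fun h =>
    (abs_mul _ _).trans_le (mul_le_mul_of_nonneg_left h (abs_nonneg _))
  rw [bPair]
  exact (abs_add_le _ _).trans (add_le_add ((abs_add_le _ _).trans (add_le_add
    ((abs_add_le _ _).trans (add_le_add hAf (hmul hmig))) (hmul hsel))) (hmul hrec))

lemma measurable_bPair_tilted_smul [CompactSpace Ω] [BorelSpace Ω] [Countable I]
    (hVm : Measurable fun p : Ω × Ω => V p.1 p.2) [IsMarkovKernel η] {ξ : I}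
    (ha : Summable (a ξ)) {Z : I → Measure Ω}
    (hZ : ∀ ξ, IsProbabilityMeasure (Z ξ)) (F : I → C(Ω, ℝ)) (f : C(Ω, ℝ)) :
    Measurable fun u : ℝ => bPair a A V η s r ρ (fun ξ' => (Z ξ').tilted (u • ⇑(F ξ'))) ξ f := by
  have hpair : ∀ ξ' (k : C(Ω, ℝ)),
      Measurable fun u : ℝ => pairM ((Z ξ').tilted (u • ⇑(F ξ'))) k :=
    fun ξ' k => measurable_integral_tilted_smul (Z ξ') (F ξ').continuous.measurable
      (F := fun _ x => k x) (k.continuous.measurable.comp measurable_snd)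
  have hmig : Measurable fun u : ℝ => ∑' ξ', a ξ ξ' *
      (pairM ((Z ξ').tilted (u • ⇑(F ξ'))) f - pairM ((Z ξ).tilted (u • ⇑(F ξ))) f) :=
    Measurable.tsum_of_summable (fun ξ' => ((hpair ξ' f).sub (hpair ξ f)).const_mul _)
      fun u => summable_migration ha
        (fun ξ' => isProbabilityMeasure_tilted_smul (Z ξ') u (F ξ')) f
  exact (((hpair ξ (A f)).add (hmig.const_mul ρ)).add
    ((measurable_selPair_tilted_smul (Z ξ) (F ξ).continuous.measurable hVm
      f.continuous.measurable).const_mul s)).add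
    ((measurable_recPair_tilted_smul (Z ξ) (F ξ).continuous.measurable η
      f.continuous.measurable).const_mul r)

lemma intervalIntegrable_bPair_tilted_smul [CompactSpace Ω] [BorelSpace Ω] [Countable I]
    (hVm : Measurable fun p : Ω × Ω => V p.1 p.2) {CV : ℝ} (hV : ∀ u v, |V u v| ≤ CV)
    [IsMarkovKernel η] {ξ : I} (ha : Summable (a ξ)) {Z : I → Measure Ω}
    (hZ : ∀ ξ, IsProbabilityMeasure (Z ξ)) (F : I → C(Ω, ℝ)) (f : C(Ω, ℝ)) (t₀ t₁ : ℝ) :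
    IntervalIntegrable
      (fun u : ℝ => bPair a A V η s r ρ (fun ξ' => (Z ξ').tilted (u • ⇑(F ξ'))) ξ f)
      volume t₀ t₁ :=
  intervalIntegrable_const.mono_fun
    (measurable_bPair_tilted_smul a A V η s r ρ hVm ha hZ F f).aestronglyMeasurable
    (ae_of_all _ fun u => (Real.norm_eq_abs _).trans_le <| (abs_bPair_le a A V η s r ρ hV ha
      (fun ξ' => isProbabilityMeasure_tilted_smul (Z ξ') u (F ξ')) f).trans <|
      (le_abs_self _).trans_eq (Real.norm_eq_abs _).symm)

lemma bPair_zero (Y : I → Measure Ω) (ξ : I) : bPair a A V η s r ρ Y ξ 0 = 0 := by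
  simp [bPair, pairM, selPair, recPair]

lemma bTotal_single [DecidableEq I] (Y : I → Measure Ω) (ξ : I) (f : C(Ω, ℝ)) :
    bTotal a A V η s r ρ Y (Pi.single ξ f) = bPair a A V η s r ρ Y ξ f := by
  rw [bTotal, tsum_eq_single ξ fun ξ' h => by rw [Pi.single_eq_of_ne h, bPair_zero],
    Pi.single_eq_same]

lemma bPair_sub_bPair_of_eq_off [CompactSpace Ω] {ξ₁ ξ₂ : I} (hne : ξ₁ ≠ ξ₂)
    (ha : Summable (a ξ₁)) {Y Y' : I → Measure Ω} (hY : ∀ ξ, IsProbabilityMeasure (Y ξ))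
    (hY' : ∀ ξ, IsProbabilityMeasure (Y' ξ)) (hYY' : ∀ ξ, ξ ≠ ξ₂ → Y ξ = Y' ξ) (f : C(Ω, ℝ)) :
    bPair a A V η s r ρ Y ξ₁ f - bPair a A V η s r ρ Y' ξ₁ f
      = ρ * (a ξ₁ ξ₂ * (pairM (Y ξ₂) f - pairM (Y' ξ₂) f)) := by
  have hmig : (∑' ξ', a ξ₁ ξ' * (pairM (Y ξ') f - pairM (Y ξ₁) f))
      - ∑' ξ', a ξ₁ ξ' * (pairM (Y' ξ') f - pairM (Y' ξ₁) f)
      = a ξ₁ ξ₂ * (pairM (Y ξ₂) f - pairM (Y' ξ₂) f) := by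
    rw [← (summable_migration ha hY f).tsum_sub (summable_migration ha hY' f),
      tsum_eq_single ξ₂ fun ξ' h => by rw [hYY' ξ' h, hYY' ξ₁ hne, sub_self], hYY' ξ₁ hne]
    ring
  rw [bPair, bPair]
  rw [hYY' ξ₁ hne] at hmig ⊢
  linear_combination ρ * hmig

lemma Lambda_single_sub [CompactSpace Ω] [BorelSpace Ω] [Countable I] [DecidableEq I]
    (hVm : Measurable fun p : Ω × Ω => V p.1 p.2) {CV : ℝ} (hV : ∀ u v, |V u v| ≤ CV)
    [IsMarkovKernel η] {ξ₁ ξ₂ : I} (hne : ξ₁ ≠ ξ₂) (ha : Summable (a ξ₁)) (f : C(Ω, ℝ))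
    {Z Z' : I → Measure Ω} (hZ : ∀ ξ, IsProbabilityMeasure (Z ξ))
    (hZ' : ∀ ξ, IsProbabilityMeasure (Z' ξ)) (hZZ' : ∀ ξ, ξ ≠ ξ₂ → Z ξ = Z' ξ) :
    Lambda a A V η s r ρ (Pi.single ξ₁ f) Z - Lambda a A V η s r ρ (Pi.single ξ₁ f) Z'
      = 2 * ρ * (a ξ₁ ξ₂ * (pairM (Z ξ₂) f - pairM (Z' ξ₂) f)) := by
  have hconst : ∀ u : ℝ,
      bPair a A V η s r ρ (fun ξ => (Z ξ).tilted (u • ⇑((Pi.single ξ₁ f : I → C(Ω, ℝ)) ξ))) ξ₁ f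
        - bPair a A V η s r ρ
            (fun ξ => (Z' ξ).tilted (u • ⇑((Pi.single ξ₁ f : I → C(Ω, ℝ)) ξ))) ξ₁ f
      = ρ * (a ξ₁ ξ₂ * (pairM (Z ξ₂) f - pairM (Z' ξ₂) f)) := fun u => by
    rw [bPair_sub_bPair_of_eq_off a A V η s r ρ hne ha
      (fun ξ => isProbabilityMeasure_tilted_smul (Z ξ) u ((Pi.single ξ₁ f : I → C(Ω, ℝ)) ξ))
      (fun ξ => isProbabilityMeasure_tilted_smul (Z' ξ) u ((Pi.single ξ₁ f : I → C(Ω, ℝ)) ξ))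
      (fun ξ h => by simp only [hZZ' ξ h]) f]
    simp only [Pi.single_eq_of_ne hne.symm, ContinuousMap.coe_zero, smul_zero, tilted_zero]
  simp only [Lambda, bTotal_single]
  rw [← mul_sub, ← intervalIntegral.integral_sub
    (intervalIntegrable_bPair_tilted_smul a A V η s r ρ hVm hV ha hZ _ f 0 1)
    (intervalIntegrable_bPair_tilted_smul a A V η s r ρ hVm hV ha hZ' _ f 0 1)]
  simp only [hconst, intervalIntegral.integral_const]
  ring

end Drift

theorem cocycle_identity_symmetry_general
    [Countable I] [DecidableEq I]
    (a : I → I → ℝ)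
    (harow : ∀ ξ, HasSum (a ξ) 1)
    (A : C(E, ℝ) →L[ℝ] C(E, ℝ))
    (V : E → E → ℝ)
    (hVmeas : Measurable fun p : E × E => V p.1 p.2) (hVbdd : ∃ C : ℝ, ∀ u v, |V u v| ≤ C)
    (η : Kernel (E × E) E) [IsMarkovKernel η]
    (s r ρ : ℝ) (hρ : 0 < ρ)
    (ξ₁ ξ₂ : I) (hne : ξ₁ ≠ ξ₂) (f g : C(E, ℝ))
    (X : I → Measure E) (hX : ∀ ξ, IsProbabilityMeasure (X ξ))
    (hcoc₁ : Lambda a A V η s r ρ (Pi.single ξ₁ f + Pi.single ξ₂ g) X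
      = Lambda a A V η s r ρ (Pi.single ξ₁ f)
          (fun ζ => (X ζ).tilted ((Pi.single ξ₂ g : I → C(E, ℝ)) ζ))
        + Lambda a A V η s r ρ (Pi.single ξ₂ g) X)
    (hcoc₂ : Lambda a A V η s r ρ (Pi.single ξ₁ f + Pi.single ξ₂ g) X
      = Lambda a A V η s r ρ (Pi.single ξ₂ g)
          (fun ζ => (X ζ).tilted ((Pi.single ξ₁ f : I → C(E, ℝ)) ζ))
        + Lambda a A V η s r ρ (Pi.single ξ₁ f) X) :
    a ξ₁ ξ₂ * (pairM ((X ξ₂).tilted g) f - pairM (X ξ₂) f)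
      = a ξ₂ ξ₁ * (pairM ((X ξ₁).tilted f) g - pairM (X ξ₁) g) := by
  obtain ⟨CV, hV⟩ := hVbdd
  have hshift_prob : ∀ (ξ : I) (h : C(E, ℝ)) ζ,
      IsProbabilityMeasure ((X ζ).tilted ((Pi.single ξ h : I → C(E, ℝ)) ζ)) :=
    fun _ _ ζ => isProbabilityMeasure_tilted_continuousMap (X ζ) _
  have hshift_off : ∀ (ξ : I) (h : C(E, ℝ)) ζ, ζ ≠ ξ →
      (X ζ).tilted ((Pi.single ξ h : I → C(E, ℝ)) ζ) = X ζ := fun ξ h ζ hζ => by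
    simp only [Pi.single_eq_of_ne hζ, ContinuousMap.coe_zero, tilted_zero]
  have h₁ := Lambda_single_sub a A V η s r ρ hVmeas hV hne (harow ξ₁).summable f
    (hshift_prob ξ₂ g) hX (hshift_off ξ₂ g)
  have h₂ := Lambda_single_sub a A V η s r ρ hVmeas hV hne.symm (harow ξ₂).summable g
    (hshift_prob ξ₁ f) hX (hshift_off ξ₁ f)
  simp only [Pi.single_eq_same] at h₁ h₂
  refine mul_left_cancel₀ (mul_ne_zero two_ne_zero hρ.ne') ?_
  linarith

/-- With the interacting Fleming-Viot cocycle `Λ` (migration rate `ρ > 0`),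
fix distinct sites `ξ₁ ≠ ξ₂`, `f, g ∈ C(E)`, and the single-site families `𝐟 = f·1_{ξ₁}`,
`𝐠 = g·1_{ξ₂}`.  If `X ∈ M₁(E)^I` satisfies the cocycle identity in both orders,
`Λ(𝐟+𝐠, X) = Λ(𝐟, S_𝐠X) + Λ(𝐠, X)` and `Λ(𝐟+𝐠, X) = Λ(𝐠, S_𝐟X) + Λ(𝐟, X)`, then
`a(ξ₁,ξ₂)⟨X_{ξ₂}^g − X_{ξ₂}, f⟩ = a(ξ₂,ξ₁)⟨X_{ξ₁}^f − X_{ξ₁}, g⟩`. -/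
theorem cocycle_identity_symmetry
    [Countable I] [DecidableEq I]
    (a : I → I → ℝ) (ha0 : ∀ ξ, a ξ ξ = 0) (hapos : ∀ ξ ξ', 0 ≤ a ξ ξ')
    (harow : ∀ ξ, HasSum (a ξ) 1)
    (A : C(E, ℝ) →L[ℝ] C(E, ℝ))
    (V : E → E → ℝ) (hVsymm : ∀ u v, V u v = V v u)
    (hVmeas : Measurable fun p : E × E => V p.1 p.2) (hVbdd : ∃ C : ℝ, ∀ u v, |V u v| ≤ C)
    (η : Kernel (E × E) E) [IsMarkovKernel η]
    (s r ρ : ℝ) (hs : 0 ≤ s) (hr : 0 ≤ r) (hρ : 0 < ρ)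
    (ξ₁ ξ₂ : I) (hne : ξ₁ ≠ ξ₂) (f g : C(E, ℝ))
    (X : I → Measure E) (hX : ∀ ξ, IsProbabilityMeasure (X ξ))
    (hcoc₁ : Lambda a A V η s r ρ (Pi.single ξ₁ f + Pi.single ξ₂ g) X
      = Lambda a A V η s r ρ (Pi.single ξ₁ f)
          (fun ζ => (X ζ).tilted ((Pi.single ξ₂ g : I → C(E, ℝ)) ζ))
        + Lambda a A V η s r ρ (Pi.single ξ₂ g) X)
    (hcoc₂ : Lambda a A V η s r ρ (Pi.single ξ₁ f + Pi.single ξ₂ g) X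
      = Lambda a A V η s r ρ (Pi.single ξ₂ g)
          (fun ζ => (X ζ).tilted ((Pi.single ξ₁ f : I → C(E, ℝ)) ζ))
        + Lambda a A V η s r ρ (Pi.single ξ₁ f) X) :
    a ξ₁ ξ₂ * (pairM ((X ξ₂).tilted g) f - pairM (X ξ₂) f)
      = a ξ₂ ξ₁ * (pairM ((X ξ₁).tilted f) g - pairM (X ξ₁) g) :=
  cocycle_identity_symmetry_general a harow A V hVmeas hVbdd η s r ρ hρ ξ₁ ξ₂ hne f g X hX hcoc₁
    hcoc₂

end
end

section
/- Let E be a compact metric space, I a countable set, and a : I × I → [0,∞) with a(ξ,ξ) = 0 and Σ_{ξ'} a(ξ,ξ') = 1 for each ξ. Let Π be a Borel probability measure on M₁(E)^I such that for every pair of distinct ξ₁, ξ₂ ∈ I and every pair of continuous functions f, g : E → ℝ, for Π-almost every X one has a(ξ₁, ξ₂) ⟨X_{ξ₂}^{g} − X_{ξ₂}, f⟩ = a(ξ₂, ξ₁) ⟨X_{ξ₁}^{f} − X_{ξ₁}, g⟩ (the symmetry identity derived from reversibility of the interacting Fleming–Viot process with ρ > 0). Then for every ξ ∈ Î := {ξ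 ∈ I : a(η,ξ) > 0 for some η ∈ I}, the coordinate X_ξ is a Dirac measure for Π-almost every X. -/
/-!
Fix `η` with `a(η, ξ) > 0` and write `μ = X_ξ`, `ν = X_η`. Replacing `g` by `n g` in the
symmetry identity for the pair `(η, ξ)` gives
`a(η,ξ) ⟨μ^{n g} − μ, f⟩ = n · a(ξ,η) ⟨ν^f − ν, g⟩`. The left side is bounded by `2 a(η,ξ) ‖f‖`
while the right side is linear in `n`, so both vanish: `⟨μ^g, f⟩ = ⟨μ, f⟩`. Running `f, g`
through a countable dense subset of `C(E, ℝ)` (one null set for all of them) gives `μ^g = μ`,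
i.e. `e^g` is `μ`-a.e. constant, for a dense set of `g`; such functions separate the points of
`E`, so `μ` is a Dirac measure.
-/

open MeasureTheory Real

noncomputable section

instance (priority := 100) {α : Type*} [MeasurableSpace α] :
    MeasurableSpace (ProbabilityMeasure α) :=
  inferInstanceAs (MeasurableSpace {μ : Measure α // IsProbabilityMeasure μ})

theorem eq_zero_of_forall_abs_nat_mul_le {c C : ℝ} (h : ∀ n : ℕ, |n * c| ≤ C) : c = 0 := by
  by_contra hc
  obtain ⟨n, hn⟩ := exists_nat_gt (C / |c|)
  rw [div_lt_iff₀ (abs_pos.mpr hc)] at hn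
  have := h n
  rw [abs_mul, Nat.abs_cast] at this
  linarith

namespace ContinuousMap

section CompactSpace

variable {E : Type*} [TopologicalSpace E] [CompactSpace E] [MeasurableSpace E]
  [OpensMeasurableSpace E]

theorem integrable (μ : Measure E) [IsFiniteMeasure μ] (f : C(E, ℝ)) : Integrable f μ :=
  (BoundedContinuousFunction.mkOfCompact f).integrable μ

variable (μ : Measure E) [IsProbabilityMeasure μ]

theorem abs_integral_le_norm (f : C(E, ℝ)) : |∫ x, f x ∂μ| ≤ ‖f‖ := by
  simpa using (BoundedContinuousFunction.mkOfCompact f).norm_integral_le_norm μ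

theorem lipschitzWith_integral : LipschitzWith 1 fun f : C(E, ℝ) ↦ ∫ x, f x ∂μ :=
  LipschitzWith.of_dist_le_mul fun f g ↦ by
    simpa [dist_eq_norm, ← integral_sub (f.integrable μ) (g.integrable μ)] using
      abs_integral_le_norm μ (f - g)

end CompactSpace

theorem eq_of_forall_mem_dense_apply_eq {E : Type*} [MetricSpace E] {D : Set C(E, ℝ)}
    (hD : Dense D) {x y : E} (h : ∀ g ∈ D, g x = g y) : x = y := by
  have heval := Continuous.ext_on hD (continuous_eval_const x) (continuous_eval_const y) h
  simpa using congrFun heval ⟨(dist · y), continuous_id.dist continuous_const⟩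

end ContinuousMap

namespace MeasureTheory

theorem ae_eq_log_integral_exp_of_tilted_eq_self {α : Type*} [MeasurableSpace α]
    {μ : Measure α} [SigmaFinite μ] {g : α → ℝ} (hg : Integrable (fun x ↦ exp (g x)) μ)
    (h : μ.tilted g = μ) : ∀ᵐ x ∂μ, g x = log (∫ x, exp (g x) ∂μ) := by
  filter_upwards [log_rnDeriv_tilted_left_self hg, μ.rnDeriv_self] with x hlog hself
  rw [h, hself, ENNReal.toReal_one, log_one] at hlog
  linarith

theorem isProbabilityMeasure_tilted_continuousMap {E : Type*} [TopologicalSpace E]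
    [CompactSpace E] [MeasurableSpace E] [OpensMeasurableSpace E] (μ : Measure E)
    [IsProbabilityMeasure μ] (g : C(E, ℝ)) : IsProbabilityMeasure (μ.tilted g) :=
  isProbabilityMeasure_tilted ((ContinuousMap.comp ⟨exp, continuous_exp⟩ g).integrable μ)

variable {E : Type*} [MetricSpace E] [MeasurableSpace E] {D : Set C(E, ℝ)} {μ : Measure E}
  [IsProbabilityMeasure μ]

theorem exists_eq_dirac_of_ae_eq_const (hDc : D.Countable) (hD : Dense D) (c : C(E, ℝ) → ℝ)
    (h : ∀ g ∈ D, ∀ᵐ x ∂μ, g x = c g) : ∃ u, μ = Measure.dirac u := by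
  have hall : ∀ᵐ x ∂μ, ∀ g ∈ D, g x = c g := (ae_ball_iff hDc).mpr h
  obtain ⟨u, hu⟩ := hall.exists
  have hconst : id =ᵐ[μ] fun _ ↦ u := hall.mono fun x hx ↦
    ContinuousMap.eq_of_forall_mem_dense_apply_eq hD fun g hg ↦ (hx g hg).trans (hu g hg).symm
  exact ⟨u, by simpa using (ProbabilityTheory.hasLaw_dirac_of_ae_eq hconst).map_eq⟩

variable [CompactSpace E] [BorelSpace E]

theorem tilted_eq_self_of_forall_integral_eq (hD : Dense D) {g : C(E, ℝ)}
    (h : ∀ f ∈ D, ∫ x, f x ∂(μ.tilted g) = ∫ x, f x ∂μ) : μ.tilted g = μ := by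
  have := isProbabilityMeasure_tilted_continuousMap μ g
  refine ext_of_forall_integral_eq_of_IsFiniteMeasure fun f ↦ ?_
  exact congrFun (Continuous.ext_on hD (ContinuousMap.lipschitzWith_integral _).continuous
    (ContinuousMap.lipschitzWith_integral μ).continuous h) f.toContinuousMap

theorem integral_tilted_eq_of_forall_nat_smul (ν : Measure E) [IsProbabilityMeasure ν]
    (f g : C(E, ℝ)) {p q : ℝ} (hp : p ≠ 0)
    (h : ∀ n : ℕ, p * (∫ x, f x ∂(μ.tilted ((n : ℝ) • g : C(E, ℝ))) - ∫ x, f x ∂μ)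
      = q * (∫ x, ((n : ℝ) • g : C(E, ℝ)) x ∂(ν.tilted f)
        - ∫ x, ((n : ℝ) • g : C(E, ℝ)) x ∂ν)) :
    ∫ x, f x ∂(μ.tilted g) = ∫ x, f x ∂μ := by
  set c := q * (∫ x, g x ∂(ν.tilted f) - ∫ x, g x ∂ν)
  have hlin : ∀ n : ℕ, p * (∫ x, f x ∂(μ.tilted ((n : ℝ) • g : C(E, ℝ))) - ∫ x, f x ∂μ)
      = n * c := fun n ↦ by
    rw [h n]
    simp only [ContinuousMap.coe_smul, Pi.smul_apply, smul_eq_mul, integral_const_mul, c]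
    ring
  have hbound : ∀ n : ℕ, |n * c| ≤ |p| * (‖f‖ + ‖f‖) := fun n ↦ by
    have := isProbabilityMeasure_tilted_continuousMap μ ((n : ℝ) • g)
    rw [← hlin n, abs_mul]
    gcongr
    exact (abs_sub _ _).trans <|
      add_le_add (ContinuousMap.abs_integral_le_norm _ f) (ContinuousMap.abs_integral_le_norm μ f)
  have hc : c = 0 := eq_zero_of_forall_abs_nat_mul_le hbound
  have h1 := hlin 1
  rw [hc, mul_zero, mul_eq_zero, Nat.cast_one, one_smul] at h1
  exact sub_eq_zero.mp (h1.resolve_left hp)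

end MeasureTheory

theorem dirac_of_symmetry_identity_general
    {E : Type*} [MetricSpace E] [CompactSpace E] [MeasurableSpace E] [BorelSpace E]
    {I : Type*}
    (a : I → I → ℝ) (ha0 : ∀ ξ, a ξ ξ = 0)
    (Pi : Measure (I → ProbabilityMeasure E))
    (hsym : ∀ ξ₁ ξ₂ : I, ξ₁ ≠ ξ₂ → ∀ f g : C(E, ℝ),
      ∀ᵐ X ∂Pi,
        a ξ₁ ξ₂ * (pairM ((X ξ₂ : Measure E).tilted g) f - pairM (X ξ₂ : Measure E) f)
          = a ξ₂ ξ₁ * (pairM ((X ξ₁ : Measure E).tilted f) g - pairM (X ξ₁ : Measure E) g))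
    (ξ : I) (hξ : ∃ η : I, 0 < a η ξ) :
    ∀ᵐ X ∂Pi, ∃ u : E, (X ξ : Measure E) = Measure.dirac u := by
  obtain ⟨η, hη⟩ := hξ
  have hne : η ≠ ξ := by
    rintro rfl
    exact hη.ne' (ha0 η)
  obtain ⟨D, hDc, hDd⟩ := TopologicalSpace.exists_countable_dense C(E, ℝ)
  have hsymD : ∀ᵐ X ∂Pi, ∀ f ∈ D, ∀ g ∈ D, ∀ n : ℕ,
      a η ξ * (pairM ((X ξ : Measure E).tilted ((n : ℝ) • g : C(E, ℝ))) f
          - pairM (X ξ : Measure E) f)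
        = a ξ η * (pairM ((X η : Measure E).tilted f) ((n : ℝ) • g : C(E, ℝ))
          - pairM (X η : Measure E) ((n : ℝ) • g : C(E, ℝ))) := by
    simp only [ae_ball_iff hDc, ae_all_iff]
    exact fun f _ g _ n ↦ hsym η ξ hne f ((n : ℝ) • g)
  filter_upwards [hsymD] with X hX
  have hfix : ∀ g ∈ D, (X ξ : Measure E).tilted g = X ξ := fun g hg ↦
    tilted_eq_self_of_forall_integral_eq hDd fun f hf ↦
      integral_tilted_eq_of_forall_nat_smul _ f g hη.ne' (hX f hf g hg)
  exact exists_eq_dirac_of_ae_eq_const hDc hDd _ fun g hg ↦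
    ae_eq_log_integral_exp_of_tilted_eq_self
      ((ContinuousMap.comp ⟨exp, continuous_exp⟩ g).integrable _) (hfix g hg)

/-- Let `E` be a compact metric space, `I` countable, and `a` a migration
matrix (`a(ξ,ξ) = 0`, nonnegative, unit row sums).  Let `Π` be a Borel probability measure on
`M₁(E)^I` such that for all distinct `ξ₁, ξ₂` and all continuous `f, g : E → ℝ`, for `Π`-a.e.
`X`: `a(ξ₁,ξ₂)⟨X_{ξ₂}^g − X_{ξ₂}, f⟩ = a(ξ₂,ξ₁)⟨X_{ξ₁}^f − X_{ξ₁}, g⟩`.  Then for every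
`ξ ∈ Î = {ξ : ∃ η, a(η,ξ) > 0}`, `X_ξ` is a Dirac measure for `Π`-a.e. `X`. -/
theorem dirac_of_symmetry_identity
    {E : Type*} [MetricSpace E] [CompactSpace E] [MeasurableSpace E] [BorelSpace E]
    {I : Type*} [Countable I]
    (a : I → I → ℝ) (ha0 : ∀ ξ, a ξ ξ = 0) (hapos : ∀ ξ ξ', 0 ≤ a ξ ξ')
    (harow : ∀ ξ, HasSum (a ξ) 1)
    (Pi : Measure (I → ProbabilityMeasure E)) [IsProbabilityMeasure Pi]
    (hsym : ∀ ξ₁ ξ₂ : I, ξ₁ ≠ ξ₂ → ∀ f g : C(E, ℝ),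
      ∀ᵐ X ∂Pi,
        a ξ₁ ξ₂ * (pairM ((X ξ₂ : Measure E).tilted g) f - pairM (X ξ₂ : Measure E) f)
          = a ξ₂ ξ₁ * (pairM ((X ξ₁ : Measure E).tilted f) g - pairM (X ξ₁ : Measure E) g))
    (ξ : I) (hξ : ∃ η : I, 0 < a η ξ) :
    ∀ᵐ X ∂Pi, ∃ u : E, (X ξ : Measure E) = Measure.dirac u :=
  dirac_of_symmetry_identity_general a ha0 Pi hsym ξ hξ

end
end

section
/- Let E be a compact metric space, I a countable set, a : I × I → [0,∞) with a(ξ,ξ) = 0 and Σ_{ξ'} a(ξ,ξ') = 1, A : C(E) → C(E) a continuous linear operator, V : E² → ℝ bounded symmetric measurable, η a Markov kernel from E² to E, s, r, ρ ≥ 0, and let L be the interacting Fleming–Viot generator on the algebra 𝒜 of polynomials. For monomials Φ(X) = ∏_{i=1}^m ⟨X_{ξ_i}, f_i⟩ and Ψ(X) = ∏_{j=1}^n ⟨X_{η_j}, g_j⟩ with all f_i, g_j ∈ C(E), the carré du champ Γ(Φ,Ψ) := ½(L(ΦΨ) − Φ LΨ − Ψ LΦ) satisfies, for every X ∈ M₁(E)^I,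 Γ(Φ,Ψ)(X) = ½ Σ_{ξ∈I} ( ⟨X_ξ, D_ξΦ(X) · D_ξΨ(X)⟩ − ⟨X_ξ, D_ξΦ(X)⟩ ⟨X_ξ, D_ξΨ(X)⟩ ), where D_ξΦ(X)(u) := Σ_{i : ξ_i = ξ} f_i(u) ∏_{j ≠ i} ⟨X_{ξ_j}, f_j⟩ and similarly for D_ξΨ(X). -/
open MeasureTheory Real ProbabilityTheory

noncomputable section

variable {E : Type*} [MetricSpace E] [CompactSpace E] [MeasurableSpace E] [BorelSpace E]
variable {I : Type*}

/-- Tilting a probability measure by a continuous function, as a probability measure: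
`μ^h(dv) = e^{h v} μ(dv) / ⟨μ, e^h⟩`. -/
def ptilt (μ : ProbabilityMeasure E) (h : C(E, ℝ)) : ProbabilityMeasure E :=
  ⟨(μ : Measure E).tilted h,
    isProbabilityMeasure_tilted
      ((Real.continuous_exp.comp h.continuous).integrable_of_hasCompactSupport
        (HasCompactSupport.of_compactSpace _))⟩

/-- A monomial `X ↦ ∏ᵢ ⟨X_{ξᵢ}, fᵢ⟩` on `M₁(E)^I`. -/
def monomial {ι : Type*} [Fintype ι] (ξ : ι → I) (f : ι → C(E, ℝ))
    (X : I → ProbabilityMeasure E) : ℝ :=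
  ∏ i, pairM (X (ξ i) : Measure E) (f i)

/-- The action of the interacting Fleming-Viot generator on the monomial with data `(ξ, f)`:
`Σᵢ ⟨b_{ξᵢ}(X), fᵢ⟩∏_{j≠i}⟨X_{ξⱼ}, fⱼ⟩ + Σ_{i<k, ξᵢ=ξ_k}(⟨X_{ξᵢ}, fᵢf_k⟩ −
⟨X_{ξᵢ}, fᵢ⟩⟨X_{ξ_k}, f_k⟩)∏_{j≠i,k}⟨X_{ξⱼ}, fⱼ⟩` (the sum over unordered pairs is written
as half the sum over ordered pairs of distinct indices). -/
def LGen {ι : Type*} [Fintype ι] [DecidableEq ι] [DecidableEq I]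
    (a : I → I → ℝ) (A : C(E, ℝ) →L[ℝ] C(E, ℝ)) (V : E → E → ℝ)
    (η : Kernel (E × E) E) (s r ρ : ℝ) (ξ : ι → I) (f : ι → C(E, ℝ))
    (X : I → ProbabilityMeasure E) : ℝ :=
  (∑ i, bPair a A V η s r ρ (fun ζ => (X ζ : Measure E)) (ξ i) (f i) *
      ∏ j ∈ Finset.univ.erase i, pairM (X (ξ j) : Measure E) (f j))
  + (1/2) * ∑ i, ∑ k ∈ Finset.univ.erase i,
      (if ξ i = ξ k then
        (pairM (X (ξ i) : Measure E) (fun u => f i u * f k u)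
            - pairM (X (ξ i) : Measure E) (f i) * pairM (X (ξ k) : Measure E) (f k)) *
          ∏ j ∈ (Finset.univ.erase i).erase k, pairM (X (ξ j) : Measure E) (f j)
      else 0)

/-- The linear operator `L` agrees with the interacting Fleming-Viot generator on all
monomials; together with linearity this determines `L` on the algebra `𝒜` of polynomials. -/
def IsFVGenerator [DecidableEq I] (a : I → I → ℝ) (A : C(E, ℝ) →L[ℝ] C(E, ℝ))
    (V : E → E → ℝ) (η : Kernel (E × E) E) (s r ρ : ℝ)
    (L : ((I → ProbabilityMeasure E) → ℝ) →ₗ[ℝ] ((I → ProbabilityMeasure E) → ℝ)) : Prop :=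
  ∀ (m : ℕ) (ξ : Fin m → I) (f : Fin m → C(E, ℝ)),
    L (monomial ξ f) = LGen a A V η s r ρ ξ f

/-- The algebra `𝒜` of polynomials: the linear span of the monomials. -/
def polyAlg (E : Type*) [MetricSpace E] [CompactSpace E] [MeasurableSpace E] [BorelSpace E]
    (I : Type*) : Submodule ℝ ((I → ProbabilityMeasure E) → ℝ) :=
  Submodule.span ℝ {F | ∃ (m : ℕ) (ξ : Fin m → I) (f : Fin m → C(E, ℝ)), F = monomial ξ f}

/-- Reversibility of `Π` with respect to `L`: `∫ LΦ·Ψ dΠ = ∫ LΨ·Φ dΠ` for all `Φ, Ψ ∈ 𝒜`. -/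
def IsReversible (L : ((I → ProbabilityMeasure E) → ℝ) →ₗ[ℝ] ((I → ProbabilityMeasure E) → ℝ))
    (P : Measure (I → ProbabilityMeasure E)) : Prop :=
  ∀ Φ ∈ polyAlg E I, ∀ Ψ ∈ polyAlg E I,
    ∫ X, L Φ X * Ψ X ∂P = ∫ X, L Ψ X * Φ X ∂P

/-- `D_ξΦ(X)(u) = Σ_{i : ξᵢ = ζ} fᵢ(u) ∏_{j≠i} ⟨X_{ξⱼ}, fⱼ⟩`, the coordinate derivative of a
monomial. -/
def Dmono {ι : Type*} [Fintype ι] [DecidableEq ι] [DecidableEq I]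
    (ξ : ι → I) (f : ι → C(E, ℝ)) (X : I → ProbabilityMeasure E) (ζ : I) : E → ℝ :=
  fun u => ∑ i, if ξ i = ζ then
    f i u * ∏ j ∈ Finset.univ.erase i, pairM (X (ξ j) : Measure E) (f j) else 0

/-- The carré du champ `Γ(Φ,Ψ) = ½(L(ΦΨ) − Φ·LΨ − Ψ·LΦ)`. -/
def carre (L : ((I → ProbabilityMeasure E) → ℝ) →ₗ[ℝ] ((I → ProbabilityMeasure E) → ℝ))
    (Φ Ψ : (I → ProbabilityMeasure E) → ℝ) (X : I → ProbabilityMeasure E) : ℝ :=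
  (1/2) * (L (fun Y => Φ Y * Ψ Y) X - Φ X * L Ψ X - Ψ X * L Φ X)

/-! The drift part of the generator acts on one factor of a monomial at a time, so it satisfies
the Leibniz rule and cancels in `L(ΦΨ) − Φ LΨ − Ψ LΦ`. In the second-order part of `L(ΦΨ)` the
pairs of factors both taken from `Φ` (or both from `Ψ`) reproduce `Φ`'s (or `Ψ`'s) own
second-order term, so only the mixed pairs `(i, k)` with `ξᵢ = ηₖ` survive, each contributing
`Cov_{X_{ξᵢ}}(fᵢ, gₖ)` times the remaining factors. On the other side `D_ζΦ` and `D_ζΨ` are linear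
combinations of the `fᵢ` and `gₖ`, and expanding their covariance bilinearly gives the same sum. -/

open Finset

section SumType

variable {ι κ R : Type*} [DecidableEq ι] [DecidableEq κ]

lemma Finset.disjSum_erase_inl (s : Finset ι) (t : Finset κ) (i : ι) :
    (s.disjSum t).erase (.inl i) = (s.erase i).disjSum t := by
  ext x; cases x <;> simp

lemma Finset.disjSum_erase_inr (s : Finset ι) (t : Finset κ) (k : κ) :
    (s.disjSum t).erase (.inr k) = s.disjSum (t.erase k) := by
  ext x; cases x <;> simp

variable [Fintype ι] [Fintype κ] [CommRing R]

lemma sum_mul_prod_erase_sum_type (d p : ι ⊕ κ → R) :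
    ∑ x, d x * ∏ y ∈ univ.erase x, p y
      = (∑ i, d (.inl i) * ∏ j ∈ univ.erase i, p (.inl j)) * ∏ k, p (.inr k)
        + (∏ i, p (.inl i)) * ∑ k, d (.inr k) * ∏ l ∈ univ.erase k, p (.inr l) := by
  simp only [← univ_disjSum_univ, sum_disjSum, disjSum_erase_inl, disjSum_erase_inr,
    prod_disjSum, sum_mul, mul_sum, mul_assoc, mul_left_comm]

lemma sum_sum_erase_mul_prod_erase_erase_sum_type (c : ι ⊕ κ → ι ⊕ κ → R) (p : ι ⊕ κ → R) :
    ∑ x, ∑ y ∈ univ.erase x, c x y * ∏ z ∈ (univ.erase x).erase y, p z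
      = (∑ i, ∑ i' ∈ univ.erase i, c (.inl i) (.inl i') *
            ∏ j ∈ (univ.erase i).erase i', p (.inl j)) * ∏ k, p (.inr k)
        + (∏ i, p (.inl i)) * ∑ k, ∑ k' ∈ univ.erase k, c (.inr k) (.inr k') *
            ∏ l ∈ (univ.erase k).erase k', p (.inr l)
        + ∑ i, ∑ k, (c (.inl i) (.inr k) + c (.inr k) (.inl i)) *
            ((∏ j ∈ univ.erase i, p (.inl j)) * ∏ l ∈ univ.erase k, p (.inr l)) := by
  simp only [← univ_disjSum_univ, disjSum_erase_inl, disjSum_erase_inr, sum_disjSum,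
    prod_disjSum, sum_mul, mul_sum, add_mul, sum_add_distrib]
  rw [sum_comm (s := univ (α := κ))]
  simp only [mul_assoc, mul_left_comm]
  ring

end SumType

lemma tsum_sum_sum_mul_ite_mul_ite {ι κ R : Type*} [Fintype ι] [Fintype κ] [CommRing R]
    [TopologicalSpace R] [DecidableEq I] (ξ : ι → I) (ξ' : κ → I) (a : ι → R) (b : κ → R) (F : ι → κ → I → R) :
    ∑' ζ, ∑ i, ∑ k, F i k ζ * ((if ξ i = ζ then a i else 0) * (if ξ' k = ζ then b k else 0))
      = ∑ i, ∑ k, if ξ i = ξ' k then F i k (ξ i) * (a i * b k) else 0 := by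
  have hξ (i : ι) : ξ i ∈ univ.image ξ := mem_image_of_mem ξ (mem_univ i)
  rw [tsum_eq_sum (s := univ.image ξ) fun ζ hζ => sum_eq_zero fun i _ => sum_eq_zero fun k _ => by
    simp [show ξ i ≠ ζ from fun h => hζ (h ▸ hξ i)]]
  rw [sum_comm]
  refine sum_congr rfl fun i _ => ?_
  rw [sum_comm]
  refine sum_congr rfl fun k _ => ?_
  by_cases h : ξ i = ξ' k
  · rw [if_pos h, sum_eq_single (ξ i) (fun ζ _ hζ => by simp [Ne.symm hζ])
      fun hi => absurd (hξ i) hi]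
    simp [h]
  · rw [if_neg h]
    exact sum_eq_zero fun ζ _ => by split_ifs <;> simp_all

section Covariance

variable {Ω ι κ : Type*} [TopologicalSpace Ω] [CompactSpace Ω] [MeasurableSpace Ω]
  [BorelSpace Ω] (μ : Measure Ω)

lemma covariance_eq_pairM [IsProbabilityMeasure μ] (f g : C(Ω, ℝ)) :
    cov[f, g; μ] = pairM μ (fun u => f u * g u) - pairM μ f * pairM μ g :=
  covariance_eq_sub (f.memLp μ ℝ) (g.memLp μ ℝ)

lemma covariance_sum_smul_sum_smul [Fintype ι] [Fintype κ] [IsFiniteMeasure μ] (a : ι → ℝ)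
    (b : κ → ℝ) (f : ι → C(Ω, ℝ)) (g : κ → C(Ω, ℝ)) :
    cov[⇑(∑ i, a i • f i), ⇑(∑ k, b k • g k); μ] = ∑ i, ∑ k, cov[f i, g k; μ] * (a i * b k) := by
  simp only [ContinuousMap.coe_sum, ContinuousMap.coe_smul]
  rw [covariance_sum_sum (fun i => ((f i).memLp μ ℝ).const_smul (a i))
    (fun k => ((g k).memLp μ ℝ).const_smul (b k))]
  exact sum_congr rfl fun i _ => sum_congr rfl fun k _ => by
    rw [covariance_smul_left, covariance_smul_right]; ring

end Covariance

section Derivative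

variable {ι κ : Type*} [Fintype ι] [Fintype κ] [DecidableEq ι] [DecidableEq κ] [DecidableEq I]

omit [CompactSpace E] [BorelSpace E] in
lemma Dmono_eq_coe_sum (ξ : ι → I) (f : ι → C(E, ℝ)) (X : I → ProbabilityMeasure E) (ζ : I) :
    Dmono ξ f X ζ = ⇑(∑ i, (if ξ i = ζ then
      ∏ j ∈ univ.erase i, pairM (X (ξ j) : Measure E) (f j) else 0) • f i) := by
  ext u
  simp only [Dmono, ContinuousMap.coe_sum, ContinuousMap.coe_smul, Finset.sum_apply,
    Pi.smul_apply, smul_eq_mul]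
  exact sum_congr rfl fun i _ => by split_ifs <;> ring

lemma pairM_Dmono_mul_sub_eq_sum_covariance (ξ : ι → I) (f : ι → C(E, ℝ)) (ξ' : κ → I)
    (f' : κ → C(E, ℝ)) (X : I → ProbabilityMeasure E) (ζ : I) :
    pairM (X ζ : Measure E) (fun u => Dmono ξ f X ζ u * Dmono ξ' f' X ζ u)
        - pairM (X ζ : Measure E) (Dmono ξ f X ζ) * pairM (X ζ : Measure E) (Dmono ξ' f' X ζ)
      = ∑ i, ∑ k, cov[f i, f' k; (X ζ : Measure E)] *
          ((if ξ i = ζ then ∏ j ∈ univ.erase i, pairM (X (ξ j) : Measure E) (f j) else 0) *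
            (if ξ' k = ζ then ∏ l ∈ univ.erase k, pairM (X (ξ' l) : Measure E) (f' l) else 0)) := by
  rw [Dmono_eq_coe_sum, Dmono_eq_coe_sum, ← covariance_eq_pairM, covariance_sum_smul_sum_smul]

end Derivative

section SiteCovariance

variable {ι κ : Type*} [DecidableEq I] (X : I → ProbabilityMeasure E)

def siteCov (ξ : ι → I) (f : ι → C(E, ℝ)) (i k : ι) : ℝ :=
  if ξ i = ξ k then cov[f i, f k; (X (ξ i) : Measure E)] else 0

variable (ξ : ι → I) (f : ι → C(E, ℝ)) (ξ' : κ → I) (f' : κ → C(E, ℝ))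

omit [CompactSpace E] [BorelSpace E] in
lemma siteCov_sum_elim_inl_inl (i i' : ι) :
    siteCov X (Sum.elim ξ ξ') (Sum.elim f f') (.inl i) (.inl i') = siteCov X ξ f i i' := rfl

omit [CompactSpace E] [BorelSpace E] in
lemma siteCov_sum_elim_inr_inr (k k' : κ) :
    siteCov X (Sum.elim ξ ξ') (Sum.elim f f') (.inr k) (.inr k') = siteCov X ξ' f' k k' := rfl

omit [CompactSpace E] [BorelSpace E] in
lemma siteCov_sum_elim_inl_inr_add (i : ι) (k : κ) :
    siteCov X (Sum.elim ξ ξ') (Sum.elim f f') (.inl i) (.inr k)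
        + siteCov X (Sum.elim ξ ξ') (Sum.elim f f') (.inr k) (.inl i)
      = 2 * if ξ i = ξ' k then cov[f i, f' k; (X (ξ i) : Measure E)] else 0 := by
  by_cases h : ξ i = ξ' k
  · simp [siteCov, h, covariance_comm]; ring
  · simp [siteCov, h, Ne.symm h]

end SiteCovariance

section Generator

variable {ι κ : Type*} [Fintype ι] [Fintype κ] [DecidableEq ι] [DecidableEq κ] [DecidableEq I]
  (a : I → I → ℝ) (A : C(E, ℝ) →L[ℝ] C(E, ℝ)) (V : E → E → ℝ) (η : Kernel (E × E) E)
  (s r ρ : ℝ) (X : I → ProbabilityMeasure E)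

lemma LGen_eq_siteCov (ξ : ι → I) (f : ι → C(E, ℝ)) :
    LGen a A V η s r ρ ξ f X
      = (∑ i, bPair a A V η s r ρ (fun ζ => (X ζ : Measure E)) (ξ i) (f i) *
          ∏ j ∈ univ.erase i, pairM (X (ξ j) : Measure E) (f j))
        + (1/2) * ∑ i, ∑ k ∈ univ.erase i,
          siteCov X ξ f i k * ∏ j ∈ (univ.erase i).erase k, pairM (X (ξ j) : Measure E) (f j) := by
  unfold LGen siteCov
  congr 2
  refine sum_congr rfl fun i _ => sum_congr rfl fun k _ => ?_
  split_ifs with h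
  · rw [covariance_eq_pairM, h]
  · rw [zero_mul]

lemma LGen_sum_elim (ξ : ι → I) (f : ι → C(E, ℝ)) (ξ' : κ → I) (f' : κ → C(E, ℝ)) :
    LGen a A V η s r ρ (Sum.elim ξ ξ') (Sum.elim f f') X
      = LGen a A V η s r ρ ξ f X * monomial ξ' f' X + monomial ξ f X * LGen a A V η s r ρ ξ' f' X
        + ∑ i, ∑ k, if ξ i = ξ' k then cov[f i, f' k; (X (ξ i) : Measure E)] *
            ((∏ j ∈ univ.erase i, pairM (X (ξ j) : Measure E) (f j)) *
              ∏ l ∈ univ.erase k, pairM (X (ξ' l) : Measure E) (f' l)) else 0 := by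
  rw [LGen_eq_siteCov, sum_mul_prod_erase_sum_type, sum_sum_erase_mul_prod_erase_erase_sum_type]
  simp only [siteCov_sum_elim_inl_inr_add, siteCov_sum_elim_inl_inl, siteCov_sum_elim_inr_inr,
    Sum.elim_inl, Sum.elim_inr, LGen_eq_siteCov, monomial, mul_assoc (2 : ℝ), ← mul_sum,
    ite_zero_mul]
  ring

end Generator

theorem carre_du_champ_monomial_general
    [DecidableEq I]
    (a : I → I → ℝ)
    (A : C(E, ℝ) →L[ℝ] C(E, ℝ))
    (V : E → E → ℝ)
    (κ : Kernel (E × E) E)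
    (s r ρ : ℝ)
    (m n : ℕ) (ξ : Fin m → I) (f : Fin m → C(E, ℝ)) (ηs : Fin n → I) (g : Fin n → C(E, ℝ))
    (X : I → ProbabilityMeasure E) :
    (1/2) * (LGen a A V κ s r ρ (Sum.elim ξ ηs) (Sum.elim f g) X
        - monomial ξ f X * LGen a A V κ s r ρ ηs g X
        - monomial ηs g X * LGen a A V κ s r ρ ξ f X)
      = (1/2) * ∑' ζ : I,
          (pairM (X ζ : Measure E) (fun u => Dmono ξ f X ζ u * Dmono ηs g X ζ u)
            - pairM (X ζ : Measure E) (Dmono ξ f X ζ)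
              * pairM (X ζ : Measure E) (Dmono ηs g X ζ)) := by
  rw [LGen_sum_elim, tsum_congr (pairM_Dmono_mul_sub_eq_sum_covariance ξ f ηs g X),
    tsum_sum_sum_mul_ite_mul_ite ξ ηs _ _ fun i k ζ => cov[f i, g k; (X ζ : Measure E)]]
  ring

/-- For monomials `Φ(X) = ∏ᵢ⟨X_{ξᵢ}, fᵢ⟩` and `Ψ(X) = ∏ⱼ⟨X_{ηⱼ}, gⱼ⟩`,
the carré du champ `Γ(Φ,Ψ) = ½(L(ΦΨ) − Φ·LΨ − Ψ·LΦ)` of the interacting Fleming-Viot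
generator satisfies
`Γ(Φ,Ψ)(X) = ½ Σ_ζ (⟨X_ζ, D_ζΦ·D_ζΨ⟩ − ⟨X_ζ, D_ζΦ⟩⟨X_ζ, D_ζΨ⟩)`. -/
theorem carre_du_champ_monomial
    [Countable I] [DecidableEq I]
    (a : I → I → ℝ) (ha0 : ∀ ξ, a ξ ξ = 0) (hapos : ∀ ξ ξ', 0 ≤ a ξ ξ')
    (harow : ∀ ξ, HasSum (a ξ) 1)
    (A : C(E, ℝ) →L[ℝ] C(E, ℝ))
    (V : E → E → ℝ) (hVsymm : ∀ u v, V u v = V v u)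
    (hVmeas : Measurable fun p : E × E => V p.1 p.2) (hVbdd : ∃ C : ℝ, ∀ u v, |V u v| ≤ C)
    (κ : Kernel (E × E) E) [IsMarkovKernel κ]
    (s r ρ : ℝ) (hs : 0 ≤ s) (hr : 0 ≤ r) (hρ : 0 ≤ ρ)
    (m n : ℕ) (ξ : Fin m → I) (f : Fin m → C(E, ℝ)) (ηs : Fin n → I) (g : Fin n → C(E, ℝ))
    (X : I → ProbabilityMeasure E) :
    (1/2) * (LGen a A V κ s r ρ (Sum.elim ξ ηs) (Sum.elim f g) X
        - monomial ξ f X * LGen a A V κ s r ρ ηs g X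
        - monomial ηs g X * LGen a A V κ s r ρ ξ f X)
      = (1/2) * ∑' ζ : I,
          (pairM (X ζ : Measure E) (fun u => Dmono ξ f X ζ u * Dmono ηs g X ζ u)
            - pairM (X ζ : Measure E) (Dmono ξ f X ζ)
              * pairM (X ζ : Measure E) (Dmono ηs g X ζ)) :=
  carre_du_champ_monomial_general a A V κ s r ρ m n ξ f ηs g X
end
end

section
/- In the setting of the interacting Fleming–Viot generator L on the algebra 𝒜 of polynomials, a Borel probability measure Π on M₁(E)^I is reversible with respect to L (meaning ∫ LΦ · Ψ dΠ = ∫ LΨ · Φ dΠ for all Φ, Ψ ∈ 𝒜) if and only if for every monomial Φ ∈ 𝒜, every ξ ∈ I, and every f ∈ C(E): −½ ∫ ( ⟨X_ξ, D_ξΦ(X) · f⟩ − ⟨X_ξ, D_ξΦ(X)⟩ ⟨X_ξ, f⟩ ) Π(dX) = ∫ Φ(X) ⟨b_ξ(X), f⟩ Π(dX), where D_ξΦ(X)(u) := Σ_{i : ξ_i = ξ} f_i(u) ∏_{j ≠ i} ⟨X_{ξ_j}, f_j⟩ for Φ(X) = ∏_{i=1}^m ⟨X_{ξ_i}, f_i⟩.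 -/
open MeasureTheory Real ProbabilityTheory

noncomputable section

variable {E : Type*} [MetricSpace E] [CompactSpace E] [MeasurableSpace E] [BorelSpace E]
variable {I : Type*}

/-!
Write `Γ` for the carré du champ. On monomials the generator obeys the Leibniz rule
`L(ΦΨ) = Ψ·LΦ + Φ·LΨ + 2Γ(Φ, Ψ)`, and `Γ` is a symmetric biderivation; all of these are bounded
measurable functions on `M₁(E)^I`, so all the integrals involved split freely.

Say that a monomial `Φ` integrates by parts if `∫ (LΦ·Ψ + Γ(Φ, Ψ)) dΠ = 0` for every monomial
`Ψ`. For a monomial `⟨X_ζ, f₀⟩` of degree one, `L⟨X_ζ, f₀⟩ = ⟨b_ζ(X), f₀⟩` and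
`2Γ(Φ, ⟨X_ζ, f₀⟩) = ⟨X_ζ, D_ζΦ·f₀⟩ − ⟨X_ζ, D_ζΦ⟩⟨X_ζ, f₀⟩`, so the right-hand side of the theorem
says exactly that monomials of degree one integrate by parts. By the Leibniz rules the integrand
for `Φ₁Φ₂` against `Ψ` is the sum of the integrands for `Φ₁` against `Φ₂Ψ` and for `Φ₂` against
`Φ₁Ψ`; hence the property passes to products, so every monomial integrates by parts. Then
`∫ LΦ·Ψ dΠ = −∫ Γ(Φ, Ψ) dΠ` is symmetric in `Φ, Ψ`, and bilinearity extends this to `𝒜`.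
Conversely, reversibility applied to `(ΦΨ, 1)` (with `L1 = 0`) and to `(Φ, Ψ)` turns
`0 = ∫ L(ΦΨ) dΠ = ∫ LΦ·Ψ + ∫ LΨ·Φ + 2∫ Γ(Φ, Ψ)` into `∫ (LΦ·Ψ + Γ(Φ, Ψ)) dΠ = 0`.
-/

namespace Finset

variable {ι κ : Type*} [DecidableEq ι] [DecidableEq κ]

lemma disjSum_erase_inl_s12 (s : Finset ι) (t : Finset κ) (i : ι) :
    (s.disjSum t).erase (.inl i) = (s.erase i).disjSum t := by
  ext (x | x) <;> simp

lemma disjSum_erase_inr_s12 (s : Finset ι) (t : Finset κ) (k : κ) :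
    (s.disjSum t).erase (.inr k) = s.disjSum (t.erase k) := by
  ext (x | x) <;> simp

end Finset

namespace FlemingViot

open Finset

section Leibniz

variable {R : Type*} [CommSemiring R] {ι κ μ : Type*} [Fintype ι] [DecidableEq ι]
  [Fintype κ] [DecidableEq κ] [Fintype μ] [DecidableEq μ]

def prodDeriv (c p : ι → R) : R := ∑ i, c i * ∏ j ∈ univ.erase i, p j

def prodDeriv₂ (c : ι → ι → R) (p : ι → R) : R :=
  ∑ i, ∑ k ∈ univ.erase i, c i k * ∏ j ∈ (univ.erase i).erase k, p j

def prodDerivCross (c : ι → κ → R) (p : ι → R) (q : κ → R) : R :=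
  ∑ i, ∑ k, c i k * ((∏ j ∈ univ.erase i, p j) * ∏ l ∈ univ.erase k, q l)

@[to_additive]
lemma prod_erase_comp_equiv {M : Type*} [CommMonoid M] (e : κ ≃ ι) (p : ι → M) (i : κ) :
    ∏ j ∈ univ.erase (e i), p j = ∏ j ∈ univ.erase i, p (e j) := by
  rw [← map_univ_equiv e, show e i = e.toEmbedding i from rfl, ← map_erase, prod_map]
  rfl

lemma prod_erase_erase_comp_equiv {M : Type*} [CommMonoid M] (e : κ ≃ ι) (p : ι → M)
    (i k : κ) :
    ∏ j ∈ (univ.erase (e i)).erase (e k), p j = ∏ j ∈ (univ.erase i).erase k, p (e j) := by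
  rw [← map_univ_equiv e, show e i = e.toEmbedding i from rfl,
    show e k = e.toEmbedding k from rfl, ← map_erase, ← map_erase, prod_map]
  rfl

lemma prodDeriv_comp_equiv (e : κ ≃ ι) (c p : ι → R) :
    prodDeriv (c ∘ e) (p ∘ e) = prodDeriv c p :=
  Fintype.sum_equiv e _ _ fun i => by simp only [Function.comp_apply, prod_erase_comp_equiv]

lemma prodDeriv₂_comp_equiv (e : κ ≃ ι) (c : ι → ι → R) (p : ι → R) :
    prodDeriv₂ (fun i k => c (e i) (e k)) (p ∘ e) = prodDeriv₂ c p :=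
  Fintype.sum_equiv e _ _ fun i => by
    simp only [sum_erase_comp_equiv, prod_erase_erase_comp_equiv, Function.comp_apply]

lemma prodDerivCross_comp_equiv_left (e : μ ≃ ι) (c : ι → κ → R) (p : ι → R) (q : κ → R) :
    prodDerivCross (fun i => c (e i)) (p ∘ e) q = prodDerivCross c p q :=
  Fintype.sum_equiv e _ _ fun i => by simp only [Function.comp_apply, prod_erase_comp_equiv]

lemma prodDerivCross_swap (c : ι → κ → R) (p : ι → R) (q : κ → R) :
    prodDerivCross c p q = prodDerivCross (fun k i => c i k) q p := by
  rw [prodDerivCross, sum_comm]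
  simp only [prodDerivCross, mul_comm (∏ j ∈ univ.erase _, p j)]

lemma prodDeriv_sumType (c p : ι ⊕ κ → R) :
    prodDeriv c p = prodDeriv (c ∘ .inl) (p ∘ .inl) * ∏ k, p (.inr k)
      + (∏ i, p (.inl i)) * prodDeriv (c ∘ .inr) (p ∘ .inr) := by
  rw [prodDeriv, Fintype.sum_sum_type]
  simp only [← univ_disjSum_univ (α := ι) (β := κ), disjSum_erase_inl_s12, disjSum_erase_inr_s12,
    prod_disjSum, prodDeriv, sum_mul, mul_sum, Function.comp_apply]
  congr 1 <;> exact sum_congr rfl fun _ _ => by ring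

lemma prodDeriv₂_sumType (c : ι ⊕ κ → ι ⊕ κ → R) (hc : ∀ x y, c x y = c y x)
    (p : ι ⊕ κ → R) :
    prodDeriv₂ c p = prodDeriv₂ (fun i k => c (.inl i) (.inl k)) (p ∘ .inl) * ∏ k, p (.inr k)
      + (∏ i, p (.inl i)) * prodDeriv₂ (fun i k => c (.inr i) (.inr k)) (p ∘ .inr)
      + 2 * prodDerivCross (fun i k => c (.inl i) (.inr k)) (p ∘ .inl) (p ∘ .inr) := by
  rw [prodDeriv₂, Fintype.sum_sum_type]
  simp only [← univ_disjSum_univ (α := ι) (β := κ), disjSum_erase_inl_s12, disjSum_erase_inr_s12,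
    prod_disjSum, sum_disjSum, sum_add_distrib]
  rw [sum_comm (s := univ) (t := univ) (f := fun l i => c (.inr l) (.inl i) * _)]
  simp only [hc (.inr _) (.inl _), prodDeriv₂, prodDerivCross, sum_mul, mul_sum, two_mul,
    Function.comp_apply, mul_assoc, mul_left_comm (∏ x, p (Sum.inl x)), sum_add_distrib]
  abel

lemma prodDerivCross_sumType_left (c : ι ⊕ κ → μ → R) (p : ι ⊕ κ → R) (q : μ → R) :
    prodDerivCross c p q = (∏ k, p (.inr k)) * prodDerivCross (c ∘ .inl) (p ∘ .inl) q
      + (∏ i, p (.inl i)) * prodDerivCross (c ∘ .inr) (p ∘ .inr) q := by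
  rw [prodDerivCross, Fintype.sum_sum_type]
  simp only [← univ_disjSum_univ (α := ι) (β := κ), disjSum_erase_inl_s12, disjSum_erase_inr_s12,
    prod_disjSum, prodDerivCross, mul_sum, Function.comp_apply]
  congr 1 <;> exact sum_congr rfl fun _ _ => sum_congr rfl fun _ _ => by ring

lemma prodDerivCross_of_unique [Unique κ] (c : ι → κ → R) (p : ι → R) (q : κ → R) :
    prodDerivCross c p q = prodDeriv (fun i => c i default) p := by
  simp [prodDerivCross, prodDeriv, univ_unique]

end Leibniz

def boundedMeasurable (Ω : Type*) [MeasurableSpace Ω] : Subalgebra ℝ (Ω → ℝ) where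
  carrier := {F | Measurable F ∧ ∃ C, ∀ x, ‖F x‖ ≤ C}
  mul_mem' := fun ⟨hF, C, hC⟩ ⟨hG, D, hD⟩ => ⟨hF.mul hG, C * D, fun x => by
    rw [Pi.mul_apply, norm_mul]
    exact mul_le_mul (hC x) (hD x) (norm_nonneg _) ((norm_nonneg _).trans (hC x))⟩
  add_mem' := fun ⟨hF, C, hC⟩ ⟨hG, D, hD⟩ =>
    ⟨hF.add hG, C + D, fun x => (norm_add_le _ _).trans (add_le_add (hC x) (hD x))⟩
  algebraMap_mem' c := ⟨measurable_const, ‖c‖, fun _ => le_rfl⟩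

section BoundedMeasurable

variable {Ω : Type*} [MeasurableSpace Ω]

lemma integrable_of_mem_boundedMeasurable {μ : Measure Ω} [IsFiniteMeasure μ] {F : Ω → ℝ}
    (hF : F ∈ boundedMeasurable Ω) : Integrable F μ :=
  let ⟨hm, C, hC⟩ := hF
  .of_bound hm.aestronglyMeasurable C (ae_of_all _ hC)

lemma fun_sum_mem_boundedMeasurable {ι : Type*} (s : Finset ι) {F : ι → Ω → ℝ}
    (hF : ∀ i ∈ s, F i ∈ boundedMeasurable Ω) :
    (fun x => ∑ i ∈ s, F i x) ∈ boundedMeasurable Ω :=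
  Finset.sum_fn s F ▸ sum_mem hF

lemma fun_prod_mem_boundedMeasurable {ι : Type*} (s : Finset ι) {F : ι → Ω → ℝ}
    (hF : ∀ i ∈ s, F i ∈ boundedMeasurable Ω) :
    (fun x => ∏ i ∈ s, F i x) ∈ boundedMeasurable Ω :=
  Finset.prod_fn s F ▸ prod_mem hF

lemma tsum_mem_boundedMeasurable {ι : Type*} [Countable ι] {F : ι → Ω → ℝ}
    (hF : ∀ i, Measurable (F i)) {c : ι → ℝ} (hc : Summable c) (hFc : ∀ i x, ‖F i x‖ ≤ c i) :
    (fun x => ∑' i, F i x) ∈ boundedMeasurable Ω := by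
  have hsum (x : Ω) : Summable fun i => F i x := hc.of_norm_bounded fun i => hFc i x
  exact ⟨measurable_of_tendsto_metrizable' Filter.atTop
    (fun s => Finset.measurable_sum s fun i _ => hF i) (tendsto_pi_nhds.2 fun x => (hsum x).hasSum),
    ∑' i, c i, fun x => tsum_of_norm_bounded hc.hasSum fun i => hFc i x⟩

lemma norm_integral_le_of_forall_norm_le {μ : Measure Ω} [IsProbabilityMeasure μ] {g : Ω → ℝ}
    {C : ℝ} (hC : ∀ x, ‖g x‖ ≤ C) : ‖∫ x, g x ∂μ‖ ≤ C := by
  simpa using norm_integral_le_of_norm_le_const (μ := μ) (ae_of_all _ hC)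

variable {ι κ : Type*} [Fintype ι] [DecidableEq ι] [Fintype κ] [DecidableEq κ]

lemma prodDeriv_mem_boundedMeasurable {c p : ι → Ω → ℝ} (hc : ∀ i, c i ∈ boundedMeasurable Ω)
    (hp : ∀ i, p i ∈ boundedMeasurable Ω) :
    (fun x => prodDeriv (c · x) (p · x)) ∈ boundedMeasurable Ω :=
  fun_sum_mem_boundedMeasurable _ fun i _ =>
    mul_mem (hc i) (fun_prod_mem_boundedMeasurable _ fun j _ => hp j)

lemma prodDeriv₂_mem_boundedMeasurable {c : ι → ι → Ω → ℝ} {p : ι → Ω → ℝ}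
    (hc : ∀ i k, c i k ∈ boundedMeasurable Ω) (hp : ∀ i, p i ∈ boundedMeasurable Ω) :
    (fun x => prodDeriv₂ (c · · x) (p · x)) ∈ boundedMeasurable Ω :=
  fun_sum_mem_boundedMeasurable _ fun i _ => fun_sum_mem_boundedMeasurable _ fun k _ =>
    mul_mem (hc i k) (fun_prod_mem_boundedMeasurable _ fun j _ => hp j)

lemma prodDerivCross_mem_boundedMeasurable {c : ι → κ → Ω → ℝ} {p : ι → Ω → ℝ} {q : κ → Ω → ℝ}
    (hc : ∀ i k, c i k ∈ boundedMeasurable Ω) (hp : ∀ i, p i ∈ boundedMeasurable Ω)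
    (hq : ∀ k, q k ∈ boundedMeasurable Ω) :
    (fun x => prodDerivCross (c · · x) (p · x) (q · x)) ∈ boundedMeasurable Ω :=
  fun_sum_mem_boundedMeasurable _ fun i _ => fun_sum_mem_boundedMeasurable _ fun k _ =>
    mul_mem (hc i k) (mul_mem (fun_prod_mem_boundedMeasurable _ fun j _ => hp j)
      (fun_prod_mem_boundedMeasurable _ fun l _ => hq l))

end BoundedMeasurable

lemma measurable_integral_probabilityMeasure {α β : Type*} [MeasurableSpace α] [MeasurableSpace β]
    {φ : α → ProbabilityMeasure β} (hφ : Measurable φ) {F : α → β → ℝ}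
    (hF : Measurable (Function.uncurry F)) :
    Measurable fun x => ∫ y, F x y ∂(φ x : Measure β) := by
  let κ : Kernel α β := ⟨fun x => φ x, measurable_subtype_coe.comp hφ⟩
  have : IsMarkovKernel κ := ⟨fun x => (φ x).prop⟩
  exact (hF.stronglyMeasurable.integral_kernel_prod_right (κ := κ)).measurable

section Coordinates

variable {β : Type*} [MeasurableSpace β]

lemma measurable_integral_snd {F : β → β → ℝ} (hF : Measurable (Function.uncurry F)) :
    Measurable fun p : ProbabilityMeasure β × β => ∫ v, F p.2 v ∂(p.1 : Measure β) :=
  measurable_integral_probabilityMeasure measurable_fst (F := fun p v => F p.2 v)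
    (hF.comp (measurable_fst.snd.prodMk measurable_snd))

lemma integral_coord_mem (ζ : I) {F : ProbabilityMeasure β → β → ℝ}
    (hF : Measurable (Function.uncurry F)) {C : ℝ} (hC : ∀ μ u, ‖F μ u‖ ≤ C) :
    (fun X : I → ProbabilityMeasure β => ∫ u, F (X ζ) u ∂(X ζ : Measure β))
      ∈ boundedMeasurable (I → ProbabilityMeasure β) :=
  ⟨(measurable_integral_probabilityMeasure measurable_id hF).comp (measurable_pi_apply ζ), C,
    fun X => norm_integral_le_of_forall_norm_le (hC (X ζ))⟩

lemma pairM_coord_mem (ζ : I) {g : β → ℝ} (hg : Measurable g) {C : ℝ} (hC : ∀ u, ‖g u‖ ≤ C) :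
    (fun X : I → ProbabilityMeasure β => pairM (X ζ : Measure β) g)
      ∈ boundedMeasurable (I → ProbabilityMeasure β) :=
  integral_coord_mem ζ (F := fun _ u => g u) (hg.comp measurable_snd) fun _ => hC

lemma iteratedIntegral_coord_mem (ζ : I) {F : β → β → ℝ} (hF : Measurable (Function.uncurry F))
    {C : ℝ} (hC : ∀ u v, ‖F u v‖ ≤ C) :
    (fun X : I → ProbabilityMeasure β => ∫ u, ∫ v, F u v ∂(X ζ : Measure β) ∂(X ζ : Measure β))
      ∈ boundedMeasurable (I → ProbabilityMeasure β) :=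
  integral_coord_mem ζ (F := fun (μ : ProbabilityMeasure β) u => ∫ v, F u v ∂(μ : Measure β))
    (measurable_integral_snd hF) fun _ u => norm_integral_le_of_forall_norm_le (hC u)

end Coordinates

local notation "𝔅" => boundedMeasurable (I → ProbabilityMeasure E)

lemma pairM_coord_mem_of_continuous (ζ : I) (g : C(E, ℝ)) :
    (fun X : I → ProbabilityMeasure E => pairM (X ζ : Measure E) g) ∈ 𝔅 :=
  pairM_coord_mem ζ g.continuous.measurable g.norm_coe_le_norm

lemma selPair_coord_mem {V : E → E → ℝ} (hVmeas : Measurable fun p : E × E => V p.1 p.2)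
    (hVbdd : ∃ C : ℝ, ∀ u v, |V u v| ≤ C) (ζ : I) (f : C(E, ℝ)) :
    (fun X : I → ProbabilityMeasure E => selPair V (X ζ : Measure E) f) ∈ 𝔅 := by
  obtain ⟨C, hC⟩ := hVbdd
  refine sub_mem (integral_coord_mem ζ (F := fun μ u => (∫ v, V u v ∂(μ : Measure E)) * f u)
      ((measurable_integral_snd hVmeas).mul (f.continuous.measurable.comp measurable_snd))
      (C := C * ‖f‖) fun μ u => ?_)
    (mul_mem (pairM_coord_mem_of_continuous ζ f) (iteratedIntegral_coord_mem ζ hVmeas hC))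
  rw [norm_mul]
  exact mul_le_mul (norm_integral_le_of_forall_norm_le (hC u)) (f.norm_coe_le_norm u)
    (norm_nonneg _) ((abs_nonneg _).trans (hC u u))

lemma recPair_coord_mem (η : Kernel (E × E) E) [IsMarkovKernel η] (ζ : I) (f : C(E, ℝ)) :
    (fun X : I → ProbabilityMeasure E => recPair η (X ζ : Measure E) f) ∈ 𝔅 :=
  sub_mem (iteratedIntegral_coord_mem ζ (F := fun v w => ∫ z, f z ∂(η (v, w)))
      (f.continuous.measurable.stronglyMeasurable.integral_kernel (κ := η)).measurable
      fun _ _ => norm_integral_le_of_forall_norm_le f.norm_coe_le_norm)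
    (pairM_coord_mem_of_continuous ζ f)

lemma migration_coord_mem [Countable I] {a : I → I → ℝ} (ha : ∀ ξ, Summable (a ξ)) (ζ : I)
    (f : C(E, ℝ)) :
    (fun X : I → ProbabilityMeasure E =>
      ∑' ξ' : I, a ζ ξ' * (pairM (X ξ' : Measure E) f - pairM (X ζ : Measure E) f)) ∈ 𝔅 := by
  refine tsum_mem_boundedMeasurable (fun ξ' => (mul_mem (algebraMap_mem _ (a ζ ξ'))
      (sub_mem (pairM_coord_mem_of_continuous ξ' f) (pairM_coord_mem_of_continuous ζ f))).1)
    ((ha ζ).norm.mul_right (2 * ‖f‖)) fun ξ' X => ?_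
  rw [norm_mul]
  refine mul_le_mul_of_nonneg_left ((norm_sub_le _ _).trans ?_) (norm_nonneg _)
  have h (ξ : I) : ‖pairM (X ξ : Measure E) f‖ ≤ ‖f‖ :=
    norm_integral_le_of_forall_norm_le f.norm_coe_le_norm
  linarith [h ξ', h ζ]

def drift (a : I → I → ℝ) (A : C(E, ℝ) →L[ℝ] C(E, ℝ)) (V : E → E → ℝ) (η : Kernel (E × E) E)
    (s r ρ : ℝ) (ζ : I) (f : C(E, ℝ)) (X : I → ProbabilityMeasure E) : ℝ :=
  bPair a A V η s r ρ (fun w => (X w : Measure E)) ζ f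

lemma drift_mem [Countable I] {a : I → I → ℝ} (ha : ∀ ξ, Summable (a ξ))
    (A : C(E, ℝ) →L[ℝ] C(E, ℝ)) {V : E → E → ℝ}
    (hVmeas : Measurable fun p : E × E => V p.1 p.2) (hVbdd : ∃ C : ℝ, ∀ u v, |V u v| ≤ C)
    (η : Kernel (E × E) E) [IsMarkovKernel η] (s r ρ : ℝ) (ζ : I) (f : C(E, ℝ)) :
    drift a A V η s r ρ ζ f ∈ 𝔅 :=
  add_mem (add_mem (add_mem (pairM_coord_mem_of_continuous ζ (A f))
    (mul_mem (algebraMap_mem _ ρ) (migration_coord_mem ha ζ f)))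
    (mul_mem (algebraMap_mem _ s) (selPair_coord_mem hVmeas hVbdd ζ f)))
    (mul_mem (algebraMap_mem _ r) (recPair_coord_mem η ζ f))

section Algebra

variable {E : Type*} [MetricSpace E] [MeasurableSpace E] {ι κ ι' κ' : Type*}

def factors (ξ : ι → I) (f : ι → C(E, ℝ)) (X : I → ProbabilityMeasure E) : ι → ℝ :=
  fun i => pairM (X (ξ i) : Measure E) (f i)

section Fintype

variable [Fintype ι] [Fintype κ] [Fintype ι']

lemma monomial_comp_equiv (e : ι' ≃ ι) (ξ : ι → I) (f : ι → C(E, ℝ)) :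
    monomial (ξ ∘ e) (f ∘ e) = monomial ξ f :=
  funext fun _ => Fintype.prod_equiv e _ _ fun _ => rfl

lemma monomial_sumType (ξ : ι ⊕ κ → I) (f : ι ⊕ κ → C(E, ℝ)) :
    monomial ξ f = monomial (ξ ∘ .inl) (f ∘ .inl) * monomial (ξ ∘ .inr) (f ∘ .inr) :=
  funext fun _ => Fintype.prod_sum_type _

lemma monomial_of_isEmpty [IsEmpty ι] (ξ : ι → I) (f : ι → C(E, ℝ)) : monomial ξ f = 1 :=
  funext fun _ => Fintype.prod_empty _

end Fintype

variable [DecidableEq I]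

def siteCov (ξ : ι → I) (f : ι → C(E, ℝ)) (ξ' : κ → I) (f' : κ → C(E, ℝ))
    (X : I → ProbabilityMeasure E) : ι → κ → ℝ := fun i k =>
  if ξ i = ξ' k then
    pairM (X (ξ i) : Measure E) (fun u => f i u * f' k u)
      - pairM (X (ξ i) : Measure E) (f i) * pairM (X (ξ' k) : Measure E) (f' k)
  else 0

lemma siteCov_swap (ξ : ι → I) (f : ι → C(E, ℝ)) (ξ' : κ → I) (f' : κ → C(E, ℝ))
    (X : I → ProbabilityMeasure E) (i : ι) (k : κ) :
    siteCov ξ f ξ' f' X i k = siteCov ξ' f' ξ f X k i := by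
  unfold siteCov
  split_ifs with h h' h'
  · simp only [h, mul_comm (f i _)]
    ring
  · exact absurd h.symm h'
  · exact absurd h'.symm h
  · rfl

variable [Fintype ι] [DecidableEq ι] [Fintype κ] [DecidableEq κ] [Fintype ι'] [DecidableEq ι']
  [Fintype κ'] [DecidableEq κ']

/-- `2Γ(Φ, Ψ)`, twice the carré du champ of the monomials with data `(ξ, f)` and `(ξ', f')`. -/
def carreMono (ξ : ι → I) (f : ι → C(E, ℝ)) (ξ' : κ → I) (f' : κ → C(E, ℝ))
    (X : I → ProbabilityMeasure E) : ℝ :=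
  prodDerivCross (siteCov ξ f ξ' f' X) (factors ξ f X) (factors ξ' f' X)

lemma carreMono_comm (ξ : ι → I) (f : ι → C(E, ℝ)) (ξ' : κ → I) (f' : κ → C(E, ℝ)) :
    carreMono ξ f ξ' f' = carreMono ξ' f' ξ f := by
  ext X
  simp only [carreMono, prodDerivCross_swap (siteCov ξ f ξ' f' X), siteCov_swap ξ f]

lemma carreMono_comp_equiv_left (e : ι' ≃ ι) (ξ : ι → I) (f : ι → C(E, ℝ)) (ξ' : κ → I)
    (f' : κ → C(E, ℝ)) : carreMono (ξ ∘ e) (f ∘ e) ξ' f' = carreMono ξ f ξ' f' :=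
  funext fun X => prodDerivCross_comp_equiv_left e (siteCov ξ f ξ' f' X) (factors ξ f X) _

lemma carreMono_sumType_left (ξ : ι ⊕ κ → I) (f : ι ⊕ κ → C(E, ℝ)) (ξ' : ι' → I)
    (f' : ι' → C(E, ℝ)) :
    carreMono ξ f ξ' f' =
      monomial (ξ ∘ .inr) (f ∘ .inr) * carreMono (ξ ∘ .inl) (f ∘ .inl) ξ' f'
        + monomial (ξ ∘ .inl) (f ∘ .inl) * carreMono (ξ ∘ .inr) (f ∘ .inr) ξ' f' :=
  funext fun X => prodDerivCross_sumType_left (siteCov ξ f ξ' f' X) _ _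

lemma carreMono_sumType_right (ξ : ι' → I) (f : ι' → C(E, ℝ)) (ξ' : ι ⊕ κ → I)
    (f' : ι ⊕ κ → C(E, ℝ)) :
    carreMono ξ f ξ' f' =
      monomial (ξ' ∘ .inr) (f' ∘ .inr) * carreMono ξ f (ξ' ∘ .inl) (f' ∘ .inl)
        + monomial (ξ' ∘ .inl) (f' ∘ .inl) * carreMono ξ f (ξ' ∘ .inr) (f' ∘ .inr) := by
  simp only [carreMono_comm ξ f]
  exact carreMono_sumType_left ξ' f' ξ f

lemma carreMono_of_isEmpty_left [IsEmpty ι] (ξ : ι → I) (f : ι → C(E, ℝ)) (ξ' : κ → I)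
    (f' : κ → C(E, ℝ)) : carreMono ξ f ξ' f' = 0 :=
  funext fun _ => by simp [carreMono, prodDerivCross]

variable (a : I → I → ℝ) (A : C(E, ℝ) →L[ℝ] C(E, ℝ)) (V : E → E → ℝ) (η : Kernel (E × E) E)
  (s r ρ : ℝ)

lemma LGen_eq (ξ : ι → I) (f : ι → C(E, ℝ)) (X : I → ProbabilityMeasure E) :
    LGen a A V η s r ρ ξ f X =
      prodDeriv (fun i => bPair a A V η s r ρ (fun w => (X w : Measure E)) (ξ i) (f i))
        (factors ξ f X) + 1 / 2 * prodDeriv₂ (siteCov ξ f ξ f X) (factors ξ f X) := by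
  simp only [LGen, prodDeriv, prodDeriv₂, siteCov, ite_zero_mul, factors]

lemma LGen_comp_equiv (e : ι' ≃ ι) (ξ : ι → I) (f : ι → C(E, ℝ)) :
    LGen a A V η s r ρ (ξ ∘ e) (f ∘ e) = LGen a A V η s r ρ ξ f := by
  ext X
  simp only [LGen_eq]
  exact congr_arg₂ (· + 1 / 2 * ·)
    (prodDeriv_comp_equiv e (fun i => bPair a A V η s r ρ (fun w => (X w : Measure E)) (ξ i) (f i))
      (factors ξ f X))
    (prodDeriv₂_comp_equiv e (siteCov ξ f ξ f X) (factors ξ f X))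

lemma LGen_sumType (ξ : ι ⊕ κ → I) (f : ι ⊕ κ → C(E, ℝ)) :
    LGen a A V η s r ρ ξ f =
      monomial (ξ ∘ .inr) (f ∘ .inr) * LGen a A V η s r ρ (ξ ∘ .inl) (f ∘ .inl)
        + monomial (ξ ∘ .inl) (f ∘ .inl) * LGen a A V η s r ρ (ξ ∘ .inr) (f ∘ .inr)
        + carreMono (ξ ∘ .inl) (f ∘ .inl) (ξ ∘ .inr) (f ∘ .inr) := by
  ext X
  simp only [Pi.add_apply, Pi.mul_apply, LGen_eq, carreMono, monomial]
  rw [prodDeriv_sumType, prodDeriv₂_sumType _ (siteCov_swap ξ f ξ f X)]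
  unfold factors siteCov
  simp only [Function.comp_def]
  ring

lemma LGen_of_isEmpty [IsEmpty ι] (ξ : ι → I) (f : ι → C(E, ℝ)) :
    LGen a A V η s r ρ ξ f = 0 :=
  funext fun _ => by simp [LGen]

lemma LGen_of_unique [Unique ι] (ξ : ι → I) (f : ι → C(E, ℝ)) (X : I → ProbabilityMeasure E) :
    LGen a A V η s r ρ ξ f X
      = bPair a A V η s r ρ (fun w => (X w : Measure E)) (ξ default) (f default) := by
  simp [LGen, univ_unique]

/-- `LΦ · Ψ + Γ(Φ, Ψ)` for the monomials `Φ, Ψ` with data `(ξ, f)` and `(ξ', f')`. -/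
def ibpIntegrand (ξ : ι → I) (f : ι → C(E, ℝ)) (ξ' : κ → I) (f' : κ → C(E, ℝ))
    (X : I → ProbabilityMeasure E) : ℝ :=
  LGen a A V η s r ρ ξ f X * monomial ξ' f' X + 1 / 2 * carreMono ξ f ξ' f' X

lemma ibpIntegrand_comp_equiv_left (e : ι' ≃ ι) (ξ : ι → I) (f : ι → C(E, ℝ)) (ξ' : κ → I)
    (f' : κ → C(E, ℝ)) :
    ibpIntegrand a A V η s r ρ (ξ ∘ e) (f ∘ e) ξ' f' = ibpIntegrand a A V η s r ρ ξ f ξ' f' := by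
  ext X
  simp only [ibpIntegrand, LGen_comp_equiv, carreMono_comp_equiv_left]

lemma ibpIntegrand_comp_equiv_right (e : ι' ≃ κ) (ξ : ι → I) (f : ι → C(E, ℝ)) (ξ' : κ → I)
    (f' : κ → C(E, ℝ)) :
    ibpIntegrand a A V η s r ρ ξ f (ξ' ∘ e) (f' ∘ e) = ibpIntegrand a A V η s r ρ ξ f ξ' f' := by
  ext X
  simp only [ibpIntegrand, monomial_comp_equiv, carreMono_comm ξ f, carreMono_comp_equiv_left]

lemma ibpIntegrand_sumType (ξ : ι ⊕ κ → I) (f : ι ⊕ κ → C(E, ℝ)) (ξ' : κ' → I)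
    (f' : κ' → C(E, ℝ)) :
    ibpIntegrand a A V η s r ρ ξ f ξ' f' =
      ibpIntegrand a A V η s r ρ (ξ ∘ .inl) (f ∘ .inl) (Sum.elim (ξ ∘ .inr) ξ')
          (Sum.elim (f ∘ .inr) f')
        + ibpIntegrand a A V η s r ρ (ξ ∘ .inr) (f ∘ .inr) (Sum.elim (ξ ∘ .inl) ξ')
          (Sum.elim (f ∘ .inl) f') := by
  ext X
  simp only [ibpIntegrand, Pi.add_apply, LGen_sumType, monomial_sumType (Sum.elim _ _),
    carreMono_sumType_left ξ, carreMono_sumType_right _ _ (Sum.elim _ _), Sum.elim_comp_inl,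
    Sum.elim_comp_inr, Pi.mul_apply, carreMono_comm (ξ ∘ .inr) (f ∘ .inr) (ξ ∘ .inl)]
  ring

lemma ibpIntegrand_eq_half (ξ : ι → I) (f : ι → C(E, ℝ)) (ξ' : κ → I) (f' : κ → C(E, ℝ))
    (X : I → ProbabilityMeasure E) :
    ibpIntegrand a A V η s r ρ ξ f ξ' f' X = 1 / 2 * (LGen a A V η s r ρ (Sum.elim ξ ξ')
        (Sum.elim f f') X + LGen a A V η s r ρ ξ f X * monomial ξ' f' X
          - LGen a A V η s r ρ ξ' f' X * monomial ξ f X) := by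
  simp only [ibpIntegrand, LGen_sumType, Sum.elim_comp_inl, Sum.elim_comp_inr, Pi.add_apply,
    Pi.mul_apply]
  ring

variable (P : Measure (I → ProbabilityMeasure E))

def IntegratesByParts (ξ : ι → I) (f : ι → C(E, ℝ)) : Prop :=
  ∀ (κ : Type) [Fintype κ] [DecidableEq κ] (ξ' : κ → I) (f' : κ → C(E, ℝ)),
    ∫ X, ibpIntegrand a A V η s r ρ ξ f ξ' f' X ∂P = 0

variable {a A V η s r ρ P}

lemma integratesByParts_of_isEmpty [IsEmpty ι] (ξ : ι → I) (f : ι → C(E, ℝ)) :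
    IntegratesByParts a A V η s r ρ P ξ f := by
  intro κ _ _ ξ' f'
  simp [ibpIntegrand, LGen_of_isEmpty, carreMono_of_isEmpty_left]

lemma integratesByParts_comp_equiv_iff (e : ι' ≃ ι) {ξ : ι → I} {f : ι → C(E, ℝ)} :
    IntegratesByParts a A V η s r ρ P (ξ ∘ e) (f ∘ e) ↔ IntegratesByParts a A V η s r ρ P ξ f := by
  simp only [IntegratesByParts, ibpIntegrand_comp_equiv_left]

end Algebra

lemma _root_.IsFVGenerator.map_monomial {E : Type*} [MetricSpace E] [MeasurableSpace E]
    [DecidableEq I] {a : I → I → ℝ} {A : C(E, ℝ) →L[ℝ] C(E, ℝ)} {V : E → E → ℝ}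
    {η : Kernel (E × E) E} {s r ρ : ℝ}
    {L : ((I → ProbabilityMeasure E) → ℝ) →ₗ[ℝ] ((I → ProbabilityMeasure E) → ℝ)}
    (hL : IsFVGenerator a A V η s r ρ L) {ι : Type} [Fintype ι] [DecidableEq ι] (ξ : ι → I)
    (f : ι → C(E, ℝ)) : L (monomial ξ f) = LGen a A V η s r ρ ξ f := by
  rw [← monomial_comp_equiv (Fintype.equivFin ι).symm, hL, LGen_comp_equiv]

section Membership

lemma monomial_mem {ι : Type*} [Fintype ι] (ξ : ι → I) (f : ι → C(E, ℝ)) : monomial ξ f ∈ 𝔅 :=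
  fun_prod_mem_boundedMeasurable _ fun i _ => pairM_coord_mem_of_continuous (ξ i) (f i)

lemma monomial_mem_polyAlg {ι : Type} [Fintype ι] (ξ : ι → I) (f : ι → C(E, ℝ)) :
    monomial ξ f ∈ polyAlg E I := by
  rw [← monomial_comp_equiv (Fintype.equivFin ι).symm]
  exact Submodule.subset_span ⟨_, _, _, rfl⟩

lemma polyAlg_le_boundedMeasurable : polyAlg E I ≤ Subalgebra.toSubmodule 𝔅 :=
  Submodule.span_le.2 fun _ ⟨_, ξ, f, hΦ⟩ => hΦ ▸ monomial_mem ξ f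

variable [DecidableEq I] {ι κ : Type*}

lemma siteCov_mem (ξ : ι → I) (f : ι → C(E, ℝ)) (ξ' : κ → I) (f' : κ → C(E, ℝ)) (i : ι)
    (k : κ) : (fun X => siteCov ξ f ξ' f' X i k) ∈ 𝔅 := by
  by_cases h : ξ i = ξ' k
  · simp only [siteCov, if_pos h]
    exact sub_mem (pairM_coord_mem_of_continuous _ (f i * f' k))
      (mul_mem (pairM_coord_mem_of_continuous _ _) (pairM_coord_mem_of_continuous _ _))
  · simp only [siteCov, if_neg h]
    exact zero_mem _

variable [Fintype ι] [DecidableEq ι] [Fintype κ] [DecidableEq κ]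

lemma pairM_sub_mul_eq_carreMono (ξ : ι → I) (f : ι → C(E, ℝ)) (ζ : I) (f₀ : C(E, ℝ))
    (X : I → ProbabilityMeasure E) :
    pairM (X ζ : Measure E) (fun u => Dmono ξ f X ζ u * f₀ u)
        - pairM (X ζ : Measure E) (Dmono ξ f X ζ) * pairM (X ζ : Measure E) f₀
      = carreMono ξ f (fun _ : Fin 1 => ζ) (fun _ => f₀) X := by
  set S := univ.filter fun i => ξ i = ζ
  set c := fun i => ∏ j ∈ univ.erase i, factors ξ f X j
  have hint (g : E → ℝ) (hg : Continuous g) : Integrable g (X ζ : Measure E) :=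
    hg.integrable_of_hasCompactSupport (HasCompactSupport.of_compactSpace _)
  have hD : Dmono ξ f X ζ = fun u => ∑ i ∈ S, f i u * c i := by
    ext u
    simp only [Dmono, S, c, sum_filter, factors]
  have h1 : pairM (X ζ : Measure E) (fun u => Dmono ξ f X ζ u * f₀ u)
      = ∑ i ∈ S, pairM (X ζ : Measure E) (fun u => f i u * f₀ u) * c i := by
    simp only [hD, pairM, sum_mul]
    rw [integral_finsetSum _ fun i _ => hint _ (by fun_prop)]
    refine sum_congr rfl fun i _ => ?_
    simp only [mul_right_comm _ (c i)]
    exact integral_mul_const _ _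
  have h2 : pairM (X ζ : Measure E) (Dmono ξ f X ζ)
      = ∑ i ∈ S, pairM (X ζ : Measure E) (f i) * c i := by
    simp only [hD, pairM]
    rw [integral_finsetSum _ fun i _ => hint _ (by fun_prop)]
    exact sum_congr rfl fun i _ => integral_mul_const _ _
  rw [h1, h2, carreMono, prodDerivCross_of_unique, prodDeriv, sum_mul, ← sum_sub_distrib]
  simp only [siteCov, ite_zero_mul, ← sum_filter]
  refine sum_congr rfl fun i hi => ?_
  rw [(mem_filter.1 hi).2]
  simp only [factors, c]
  ring

variable {a : I → I → ℝ} {A : C(E, ℝ) →L[ℝ] C(E, ℝ)} {V : E → E → ℝ} {η : Kernel (E × E) E}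
  {s r ρ : ℝ}

lemma carreMono_mem (ξ : ι → I) (f : ι → C(E, ℝ)) (ξ' : κ → I) (f' : κ → C(E, ℝ)) :
    carreMono ξ f ξ' f' ∈ 𝔅 :=
  prodDerivCross_mem_boundedMeasurable (siteCov_mem ξ f ξ' f')
    (fun i => pairM_coord_mem_of_continuous (ξ i) (f i))
    (fun k => pairM_coord_mem_of_continuous (ξ' k) (f' k))

lemma LGen_mem (hb : ∀ ζ g, drift a A V η s r ρ ζ g ∈ 𝔅)
    (ξ : ι → I) (f : ι → C(E, ℝ)) : LGen a A V η s r ρ ξ f ∈ 𝔅 := by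
  rw [show LGen a A V η s r ρ ξ f = _ from funext (LGen_eq a A V η s r ρ ξ f)]
  exact add_mem (prodDeriv_mem_boundedMeasurable (fun i => hb (ξ i) (f i))
      (fun i => pairM_coord_mem_of_continuous (ξ i) (f i)))
    (mul_mem (algebraMap_mem _ (1 / 2 : ℝ)) (prodDeriv₂_mem_boundedMeasurable (siteCov_mem ξ f ξ f)
      (fun i => pairM_coord_mem_of_continuous (ξ i) (f i))))

lemma ibpIntegrand_mem (hb : ∀ ζ g, drift a A V η s r ρ ζ g ∈ 𝔅)
    (ξ : ι → I) (f : ι → C(E, ℝ)) (ξ' : κ → I) (f' : κ → C(E, ℝ)) :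
    ibpIntegrand a A V η s r ρ ξ f ξ' f' ∈ 𝔅 :=
  add_mem (mul_mem (LGen_mem hb ξ f) (monomial_mem ξ' f'))
    (mul_mem (algebraMap_mem _ (1 / 2 : ℝ)) (carreMono_mem ξ f ξ' f'))

end Membership

variable [DecidableEq I] {a : I → I → ℝ} {A : C(E, ℝ) →L[ℝ] C(E, ℝ)} {V : E → E → ℝ}
  {η : Kernel (E × E) E} {s r ρ : ℝ} {P : Measure (I → ProbabilityMeasure E)}
  {L : ((I → ProbabilityMeasure E) → ℝ) →ₗ[ℝ] ((I → ProbabilityMeasure E) → ℝ)}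

lemma map_polyAlg_le_boundedMeasurable (hL : IsFVGenerator a A V η s r ρ L)
    (hb : ∀ ζ g, drift a A V η s r ρ ζ g ∈ 𝔅) :
    (polyAlg E I).map L ≤ Subalgebra.toSubmodule 𝔅 :=
  Submodule.map_span_le _ _ _ |>.2 fun _ ⟨_, ξ, f, hΦ⟩ => hΦ ▸ hL _ ξ f ▸ LGen_mem hb ξ f

variable [IsFiniteMeasure P]

lemma IntegratesByParts.sumType
    (hb : ∀ ζ g, drift a A V η s r ρ ζ g ∈ 𝔅)
    {ι κ : Type} [Fintype ι] [DecidableEq ι] [Fintype κ] [DecidableEq κ] {ξ : ι ⊕ κ → I}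
    {f : ι ⊕ κ → C(E, ℝ)} (h₁ : IntegratesByParts a A V η s r ρ P (ξ ∘ .inl) (f ∘ .inl))
    (h₂ : IntegratesByParts a A V η s r ρ P (ξ ∘ .inr) (f ∘ .inr)) :
    IntegratesByParts a A V η s r ρ P ξ f := by
  intro κ' _ _ ξ' f'
  rw [ibpIntegrand_sumType, integral_add'
    (integrable_of_mem_boundedMeasurable (ibpIntegrand_mem hb _ _ _ _))
    (integrable_of_mem_boundedMeasurable (ibpIntegrand_mem hb _ _ _ _)), h₁, h₂, add_zero]

lemma integratesByParts_fin
    (hb : ∀ ζ g, drift a A V η s r ρ ζ g ∈ 𝔅)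
    (h₁ : ∀ ζ f₀, IntegratesByParts a A V η s r ρ P (fun _ : Fin 1 => ζ) (fun _ => f₀)) :
    ∀ (m : ℕ) (ξ : Fin m → I) (f : Fin m → C(E, ℝ)), IntegratesByParts a A V η s r ρ P ξ f
  | 0, ξ, f => integratesByParts_of_isEmpty ξ f
  | m + 1, ξ, f => by
    rw [← integratesByParts_comp_equiv_iff finSumFinEquiv]
    refine .sumType hb (integratesByParts_fin hb h₁ m _ _) ?_
    convert h₁ (ξ (Fin.last m)) (f (Fin.last m)) using 2
    all_goals simp only [Function.comp_apply, Fin.fin_one_eq_zero, finSumFinEquiv_apply_right]; rfl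

lemma integratesByParts_of_isReversible
    (hb : ∀ ζ g, drift a A V η s r ρ ζ g ∈ 𝔅)
    (hL : IsFVGenerator a A V η s r ρ L)
    (hrev : IsReversible L P) {ι : Type} [Fintype ι] [DecidableEq ι] (ξ : ι → I)
    (f : ι → C(E, ℝ)) : IntegratesByParts a A V η s r ρ P ξ f := by
  intro κ _ _ ξ' f'
  have int {F G : (I → ProbabilityMeasure E) → ℝ} (hF : F ∈ 𝔅) (hG : G ∈ 𝔅) :
      Integrable (fun X => F X * G X) P := integrable_of_mem_boundedMeasurable (mul_mem hF hG)
  have h₀ : ∫ X, LGen a A V η s r ρ (Sum.elim ξ ξ') (Sum.elim f f') X ∂P = 0 := by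
    have := hrev _ (monomial_mem_polyAlg (Sum.elim ξ ξ') (Sum.elim f f')) _
      (monomial_mem_polyAlg Fin.elim0 Fin.elim0)
    rw [hL.map_monomial, hL.map_monomial, LGen_of_isEmpty (ι := Fin 0),
      monomial_of_isEmpty (ι := Fin 0)] at this
    simpa using this
  have h₁ : ∫ X, LGen a A V η s r ρ ξ f X * monomial ξ' f' X ∂P
      = ∫ X, LGen a A V η s r ρ ξ' f' X * monomial ξ f X ∂P := by
    simpa [hL.map_monomial] using
      hrev _ (monomial_mem_polyAlg ξ f) _ (monomial_mem_polyAlg ξ' f')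
  simp only [ibpIntegrand_eq_half]
  rw [integral_const_mul, integral_sub, integral_add, h₀, h₁, zero_add, sub_self, mul_zero]
  exacts [integrable_of_mem_boundedMeasurable (LGen_mem hb _ _),
    int (LGen_mem hb ξ f) (monomial_mem ξ' f'),
    (integrable_of_mem_boundedMeasurable (LGen_mem hb _ _)).add
      (int (LGen_mem hb ξ f) (monomial_mem ξ' f')),
    int (LGen_mem hb ξ' f') (monomial_mem ξ f)]

lemma IntegratesByParts.integral_LGen_mul_monomial
    (hb : ∀ ζ g, drift a A V η s r ρ ζ g ∈ 𝔅)
    {ι : Type*} [Fintype ι] [DecidableEq ι] {ξ : ι → I} {f : ι → C(E, ℝ)}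
    (h : IntegratesByParts a A V η s r ρ P ξ f) {κ : Type} [Fintype κ] [DecidableEq κ]
    (ξ' : κ → I) (f' : κ → C(E, ℝ)) :
    ∫ X, LGen a A V η s r ρ ξ f X * monomial ξ' f' X ∂P
      = -(1 / 2) * ∫ X, carreMono ξ f ξ' f' X ∂P := by
  have h₁ : Integrable (fun X => LGen a A V η s r ρ ξ f X * monomial ξ' f' X) P :=
    integrable_of_mem_boundedMeasurable (mul_mem (LGen_mem hb ξ f) (monomial_mem ξ' f'))
  have h₂ : Integrable (fun X => carreMono ξ f ξ' f' X) P :=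
    integrable_of_mem_boundedMeasurable (carreMono_mem ξ f ξ' f')
  have := h κ ξ' f'
  simp only [ibpIntegrand] at this
  rw [integral_add h₁ (h₂.const_mul _), integral_const_mul] at this
  linarith

lemma isReversible_of_integratesByParts
    (hb : ∀ ζ g, drift a A V η s r ρ ζ g ∈ 𝔅)
    (hL : IsFVGenerator a A V η s r ρ L)
    (h : ∀ (m : ℕ) (ξ : Fin m → I) (f : Fin m → C(E, ℝ)), IntegratesByParts a A V η s r ρ P ξ f) :
    IsReversible L P := by
  have int {Φ Ψ} (hΦ : Φ ∈ polyAlg E I) (hΨ : Ψ ∈ polyAlg E I) :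
      Integrable (fun X => L Φ X * Ψ X) P :=
    integrable_of_mem_boundedMeasurable (mul_mem
      (map_polyAlg_le_boundedMeasurable hL hb (Submodule.mem_map_of_mem hΦ))
      (polyAlg_le_boundedMeasurable hΨ))
  intro Φ hΦ Ψ hΨ
  induction hΦ, hΨ using Submodule.span_induction₂ with
  | mem_mem Φ Ψ hΦ hΨ =>
    obtain ⟨m, ξ, f, rfl⟩ := hΦ
    obtain ⟨n, ξ', f', rfl⟩ := hΨ
    rw [hL, hL, (h m ξ f).integral_LGen_mul_monomial hb, (h n ξ' f').integral_LGen_mul_monomial hb,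
      carreMono_comm]
  | zero_left => simp
  | zero_right => simp
  | add_left Φ₁ Φ₂ Ψ hΦ₁ hΦ₂ hΨ h₁ h₂ =>
    simp only [map_add, Pi.add_apply, add_mul, mul_add]
    rw [integral_add (int hΦ₁ hΨ) (int hΦ₂ hΨ), integral_add (int hΨ hΦ₁) (int hΨ hΦ₂), h₁, h₂]
  | add_right Φ Ψ₁ Ψ₂ hΦ hΨ₁ hΨ₂ h₁ h₂ =>
    simp only [map_add, Pi.add_apply, add_mul, mul_add]
    rw [integral_add (int hΦ hΨ₁) (int hΦ hΨ₂), integral_add (int hΨ₁ hΦ) (int hΨ₂ hΦ), h₁, h₂]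
  | smul_left c Φ Ψ _ _ h =>
    simp only [map_smul, Pi.smul_apply, smul_eq_mul, mul_assoc, mul_left_comm _ c]
    rw [integral_const_mul, integral_const_mul, h]
  | smul_right c Φ Ψ _ _ h =>
    simp only [map_smul, Pi.smul_apply, smul_eq_mul, mul_assoc, mul_left_comm _ c]
    rw [integral_const_mul, integral_const_mul, h]

lemma forall_integratesByParts_single_iff
    (hb : ∀ ζ g, drift a A V η s r ρ ζ g ∈ 𝔅) :
    (∀ ζ f₀, IntegratesByParts a A V η s r ρ P (fun _ : Fin 1 => ζ) (fun _ => f₀)) ↔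
      ∀ (m : ℕ) (ξ : Fin m → I) (f : Fin m → C(E, ℝ)) (ζ : I) (f₀ : C(E, ℝ)),
        -(1/2) * ∫ X, (pairM (X ζ : Measure E) (fun u => Dmono ξ f X ζ u * f₀ u)
            - pairM (X ζ : Measure E) (Dmono ξ f X ζ) * pairM (X ζ : Measure E) f₀) ∂P
          = ∫ X, monomial ξ f X * bPair a A V η s r ρ (fun w => (X w : Measure E)) ζ f₀ ∂P := by
  have key (ζ : I) (f₀ : C(E, ℝ)) {κ : Type} [Fintype κ] [DecidableEq κ] (ξ' : κ → I)
      (f' : κ → C(E, ℝ)) :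
      ∫ X, ibpIntegrand a A V η s r ρ (fun _ : Fin 1 => ζ) (fun _ => f₀) ξ' f' X ∂P
        = ∫ X, monomial ξ' f' X * bPair a A V η s r ρ (fun w => (X w : Measure E)) ζ f₀ ∂P
          + 1 / 2 * ∫ X, carreMono ξ' f' (fun _ : Fin 1 => ζ) (fun _ => f₀) X ∂P := by
    simp only [ibpIntegrand, LGen_of_unique, carreMono_comm (fun _ : Fin 1 => ζ),
      mul_comm _ (monomial ξ' f' _)]
    rw [integral_add, integral_const_mul]
    exacts [integrable_of_mem_boundedMeasurable (mul_mem (monomial_mem ξ' f') (hb ζ f₀)),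
      (integrable_of_mem_boundedMeasurable (carreMono_mem _ _ _ _)).const_mul _]
  simp only [pairM_sub_mul_eq_carreMono]
  constructor
  · intro h m ξ f ζ f₀
    linarith [key ζ f₀ ξ f, h ζ f₀ (Fin m) ξ f]
  · intro h ζ f₀ κ _ _ ξ' f'
    rw [← ibpIntegrand_comp_equiv_right _ _ _ _ _ _ _ (Fintype.equivFin κ).symm, key, ← h]
    ring

end FlemingViot

open FlemingViot

theorem reversible_iff_integration_by_parts_general
    [Countable I] [DecidableEq I]
    (a : I → I → ℝ)
    (harow : ∀ ξ, HasSum (a ξ) 1)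
    (A : C(E, ℝ) →L[ℝ] C(E, ℝ))
    (V : E → E → ℝ)
    (hVmeas : Measurable fun p : E × E => V p.1 p.2) (hVbdd : ∃ C : ℝ, ∀ u v, |V u v| ≤ C)
    (κ : Kernel (E × E) E) [IsMarkovKernel κ]
    (s r ρ : ℝ)
    (L : ((I → ProbabilityMeasure E) → ℝ) →ₗ[ℝ] ((I → ProbabilityMeasure E) → ℝ))
    (hL : IsFVGenerator a A V κ s r ρ L)
    (P : Measure (I → ProbabilityMeasure E)) [IsProbabilityMeasure P] :
    IsReversible L P ↔
      ∀ (m : ℕ) (ξ : Fin m → I) (f : Fin m → C(E, ℝ)) (ζ : I) (f₀ : C(E, ℝ)),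
        -(1/2) * ∫ X, (pairM (X ζ : Measure E) (fun u => Dmono ξ f X ζ u * f₀ u)
            - pairM (X ζ : Measure E) (Dmono ξ f X ζ)
              * pairM (X ζ : Measure E) f₀) ∂P
          = ∫ X, monomial ξ f X
              * bPair a A V κ s r ρ (fun w => (X w : Measure E)) ζ f₀ ∂P := by
  have hb := drift_mem (fun ξ => (harow ξ).summable) A hVmeas hVbdd κ s r ρ
  rw [← forall_integratesByParts_single_iff hb]
  exact ⟨fun hrev ζ f₀ => integratesByParts_of_isReversible hb hL hrev _ _,
    fun h => isReversible_of_integratesByParts hb hL (integratesByParts_fin hb h)⟩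

/-- A Borel probability measure `Π` on `M₁(E)^I` is reversible for the
interacting Fleming-Viot generator `L` iff for every monomial `Φ`, every site `ζ` and every
`f₀ ∈ C(E)`:
`−½∫(⟨X_ζ, D_ζΦ·f₀⟩ − ⟨X_ζ, D_ζΦ⟩⟨X_ζ, f₀⟩) dΠ = ∫ Φ(X)⟨b_ζ(X), f₀⟩ dΠ`. -/
theorem reversible_iff_integration_by_parts
    [Countable I] [DecidableEq I]
    (a : I → I → ℝ) (ha0 : ∀ ξ, a ξ ξ = 0) (hapos : ∀ ξ ξ', 0 ≤ a ξ ξ')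
    (harow : ∀ ξ, HasSum (a ξ) 1)
    (A : C(E, ℝ) →L[ℝ] C(E, ℝ))
    (V : E → E → ℝ) (hVsymm : ∀ u v, V u v = V v u)
    (hVmeas : Measurable fun p : E × E => V p.1 p.2) (hVbdd : ∃ C : ℝ, ∀ u v, |V u v| ≤ C)
    (κ : Kernel (E × E) E) [IsMarkovKernel κ]
    (s r ρ : ℝ) (hs : 0 ≤ s) (hr : 0 ≤ r) (hρ : 0 ≤ ρ)
    (L : ((I → ProbabilityMeasure E) → ℝ) →ₗ[ℝ] ((I → ProbabilityMeasure E) → ℝ))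
    (hL : IsFVGenerator a A V κ s r ρ L)
    (P : Measure (I → ProbabilityMeasure E)) [IsProbabilityMeasure P] :
    IsReversible L P ↔
      ∀ (m : ℕ) (ξ : Fin m → I) (f : Fin m → C(E, ℝ)) (ζ : I) (f₀ : C(E, ℝ)),
        -(1/2) * ∫ X, (pairM (X ζ : Measure E) (fun u => Dmono ξ f X ζ u * f₀ u)
            - pairM (X ζ : Measure E) (Dmono ξ f X ζ)
              * pairM (X ζ : Measure E) f₀) ∂P
          = ∫ X, monomial ξ f X
              * bPair a A V κ s r ρ (fun w => (X w : Measure E)) ζ f₀ ∂P :=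
  reversible_iff_integration_by_parts_general a harow A V hVmeas hVbdd κ s r ρ L hL P

end
end
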